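/- arXiv:2006.10339 — 11 statements merged into one kernel-verified Lean document; each statement's English description precedes it below -/
import Mathlib

section
/- Let G be a finite permutation group on a set Ω containing a sharply transitive subset, and let ω ∈ Ω. Then every intersecting set S ⊆ G satisfies |S| ≤ |G_ω|; that is, G has the EKR property. -/
/-! If `x, y` lie in an intersecting set `S` and `c, c'` in a sharply transitive set `C`, then
`x * c = y * c'` makes `c' * c⁻¹ = y⁻¹ * x` fix a point `α`, so `c` and `c'` agree at `c⁻¹ • α`,
hence `c = c'` and `x = y`. So the products `x * c` are pairwise distinct, giving
`|S| * |C| ≤ |G|`. Since `|C| = |Ω|`, the orbit-stabilizer theorem `|G| = |Ω| * |G_ω|` yields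
`|S| ≤ |G_ω|`. -/

namespace MulAction

variable (G Ω : Type*) [Group G] [MulAction G Ω]

def IsIntersectingSet (S : Set G) : Prop :=
  ∀ x ∈ S, ∀ y ∈ S, ∃ α : Ω, x • α = y • α

def IsSharplyTransitiveSet (C : Set G) : Prop :=
  ∀ α β : Ω, ∃! c, c ∈ C ∧ c • α = β

variable {G Ω}

namespace IsSharplyTransitiveSet

variable {C : Set G} (hC : IsSharplyTransitiveSet G Ω C)
include hC

theorem isPretransitive : IsPretransitive G Ω :=
  ⟨fun α β => (hC α β).exists.imp fun _ hc => hc.2⟩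

theorem eq_of_smul_eq {c c' : G} (hc : c ∈ C) (hc' : c' ∈ C) {α : Ω} (h : c • α = c' • α) :
    c = c' :=
  (hC α (c' • α)).unique ⟨hc, h⟩ ⟨hc', rfl⟩

theorem bijective_smul (ω : Ω) : Function.Bijective fun c : C => (c : G) • ω := by
  refine ⟨fun c c' h => Subtype.ext (hC.eq_of_smul_eq c.2 c'.2 h), fun β => ?_⟩
  obtain ⟨c, ⟨hc, hcβ⟩, -⟩ := hC ω β
  exact ⟨⟨c, hc⟩, hcβ⟩

theorem card_eq (ω : Ω) : Nat.card C = Nat.card Ω :=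
  Nat.card_eq_of_bijective _ (hC.bijective_smul ω)

theorem card_mul_card_stabilizer (ω : Ω) :
    Nat.card C * Nat.card (stabilizer G ω) = Nat.card G := by
  have := hC.isPretransitive
  rw [hC.card_eq ω, ← index_stabilizer_of_transitive G ω, Subgroup.index_mul_card]

end IsSharplyTransitiveSet

theorem IsIntersectingSet.injective_mul {S C : Set G} (hS : IsIntersectingSet G Ω S)
    (hC : IsSharplyTransitiveSet G Ω C) :
    Function.Injective fun p : S × C => (p.1 : G) * (p.2 : G) := by
  rintro ⟨⟨x, hx⟩, ⟨c, hc⟩⟩ ⟨⟨y, hy⟩, ⟨c', hc'⟩⟩ (h : x * c = y * c')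
  obtain ⟨α, hα⟩ := hS y hy x hx
  have hcc' : c = c' := by
    refine hC.eq_of_smul_eq hc hc' (α := c⁻¹ • α) ?_
    rw [show c' = y⁻¹ * (x * c) by rw [h]; group, mul_smul, mul_smul, smul_inv_smul, ← hα,
      inv_smul_smul]
  subst hcc'
  simp [mul_right_cancel h]

theorem IsIntersectingSet.ncard_mul_card_le [Finite G] {S C : Set G}
    (hS : IsIntersectingSet G Ω S) (hC : IsSharplyTransitiveSet G Ω C) :
    S.ncard * Nat.card C ≤ Nat.card G := by
  rw [← Nat.card_coe_set_eq, ← Nat.card_prod]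
  exact Nat.card_le_card_of_injective _ (hS.injective_mul hC)

end MulAction

open MulAction

theorem stmt2_general {Ω : Type*} {G : Type*} [Group G] [Fintype G]
    [MulAction G Ω]
    (C : Set G) (hC : ∀ α β : Ω, ∃! c, c ∈ C ∧ c • α = β)
    (ω : Ω) (S : Set G)
    (hS : ∀ x ∈ S, ∀ y ∈ S, ∃ α : Ω, x • α = y • α) :
    S.ncard ≤ Nat.card (MulAction.stabilizer G ω) := by
  have hC : IsSharplyTransitiveSet G Ω C := hC
  obtain ⟨c, -⟩ := (hC.bijective_smul ω).surjective ω
  have : Nonempty C := ⟨c⟩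
  refine Nat.le_of_mul_le_mul_left ?_ (Nat.card_pos (α := C))
  rw [mul_comm, hC.card_mul_card_stabilizer ω]
  exact IsIntersectingSet.ncard_mul_card_le hS hC

/-- Let `G` be a finite permutation group on a finite set `Ω`
containing a sharply transitive subset `C`, and let `ω ∈ Ω`.  Then every
intersecting set `S ⊆ G` satisfies `|S| ≤ |G_ω|`; that is, `G` has the EKR
property. -/
theorem stmt2 {Ω : Type*} [Fintype Ω] {G : Type*} [Group G] [Fintype G]
    [MulAction G Ω] [FaithfulSMul G Ω]
    (C : Set G) (hC : ∀ α β : Ω, ∃! c, c ∈ C ∧ c • α = β)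
    (ω : Ω) (S : Set G)
    (hS : ∀ x ∈ S, ∀ y ∈ S, ∃ α : Ω, x • α = y • α) :
    S.ncard ≤ Nat.card (MulAction.stabilizer G ω) :=
  stmt2_general C hC ω S hS
end

section
/- For every natural number M > 0 there exist a finite nonempty set Ω, a transitive permutation group G ≤ Sym(Ω), an intersecting set S ⊆ G, and a point ω ∈ Ω such that |S| > M·|G_ω|. -/
/-!
Let `V = 𝔽₂ × 𝔽₂^(M+1)`, let `H ≤ Sym(V)` be generated by the translation `t` by `e = (1, 0)`,
and let `Sym(V)` act on the cosets `Sym(V) ⧸ H`. An element fixes the coset `σH` iff its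
`σ`-conjugate lies in `H`. Any two nonzero vectors are related by a linear automorphism, so every
nonzero translation is conjugate to `t` and the translations by `{0} × 𝔽₂^(M+1)` form an
intersecting set of size `2^(M+1)`. They stay distinct in the permutation group, since `e` is
not among their differences, while point stabilizers have order at most `|H| = 2`.
-/

open Equiv MulAction

section PermutationRepresentation

variable {A X : Type*} [Group A] [MulAction A X]

instance isPretransitive_range_toPermHom [IsPretransitive A X] :
    IsPretransitive (toPermHom A X).range X where
  exists_smul_eq x y := by
    obtain ⟨g, hg⟩ := exists_smul_eq A x y
    exact ⟨(toPermHom A X).rangeRestrict g, hg⟩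

theorem card_stabilizer_range_toPermHom_le [Finite A] (x : X) :
    Nat.card (stabilizer (toPermHom A X).range x) ≤ Nat.card (stabilizer A x) := by
  refine Nat.card_le_card_of_surjective
    (fun g => ⟨(toPermHom A X).rangeRestrict g, g.2⟩) ?_
  rintro ⟨⟨_, g, rfl⟩, hg⟩
  exact ⟨⟨g, hg⟩, rfl⟩

end PermutationRepresentation

section CosetAction

variable {A : Type*} [Group A] (H : Subgroup A)

theorem smul_coe_eq_smul_coe_iff (a b σ : A) :
    a • (σ : A ⧸ H) = b • (σ : A ⧸ H) ↔ σ⁻¹ * (a⁻¹ * b) * σ ∈ H := by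
  rw [Quotient.smul_mk, Quotient.smul_mk, smul_eq_mul, smul_eq_mul, QuotientGroup.eq]
  simp only [mul_inv_rev, mul_assoc]

theorem injOn_rangeRestrict_toPermHom_quotient {T : Set A}
    (hT : ∀ a ∈ T, ∀ b ∈ T, a⁻¹ * b ∈ H → a = b) :
    Set.InjOn (toPermHom A (A ⧸ H)).rangeRestrict T := by
  intro a ha b hb hab
  have hfix : a • ((1 : A) : A ⧸ H) = b • ((1 : A) : A ⧸ H) :=
    congrArg (fun g : (toPermHom A (A ⧸ H)).range => g • ((1 : A) : A ⧸ H)) hab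
  rw [smul_coe_eq_smul_coe_iff, inv_one, one_mul, mul_one] at hfix
  exact hT a ha b hb hfix

end CosetAction

section Translations

variable {V : Type*} [AddCommGroup V]

theorem addEquiv_conj_addLeft (f : V ≃+ V) (v : V) :
    (f.toEquiv : Perm V)⁻¹ * Equiv.addLeft (f v) * f.toEquiv = Equiv.addLeft v := by
  ext x
  simp

theorem addLeft_mem_zpowers_addLeft_iff (e v : V) :
    Equiv.addLeft v ∈ Subgroup.zpowers (Equiv.addLeft e) ↔ ∃ k : ℤ, k • e = v := by
  simp only [Subgroup.mem_zpowers_iff, zsmul_addLeft]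
  exact ⟨fun ⟨k, hk⟩ => ⟨k, by simpa using Equiv.congr_fun hk 0⟩, fun ⟨k, hk⟩ => ⟨k, hk ▸ rfl⟩⟩

theorem card_zpowers_addLeft_le {e : V} {n : ℕ} (hn : n ≠ 0) (he : n • e = 0) :
    Nat.card (Subgroup.zpowers (Equiv.addLeft e)) ≤ n := by
  rw [Nat.card_zpowers]
  exact orderOf_le_of_pow_eq_one (Nat.pos_of_ne_zero hn) (by rw [nsmul_addLeft, he, addLeft_zero])

theorem exists_linearEquiv_apply_eq (K : Type*) [DivisionRing K] [Module K V] {e c : V}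
    (he : e ≠ 0) (hc : c ≠ 0) :
    ∃ g : V ≃ₗ[K] V, g e = c := by
  obtain ⟨g, hg⟩ := Submodule.exists_linearEquiv_restrict_eq
    ((LinearEquiv.coord K V e he).trans (LinearEquiv.toSpanNonzeroSingleton K V c hc))
  refine ⟨g, ?_⟩
  simpa [LinearEquiv.coord_self] using (hg ⟨e, Submodule.mem_span_singleton_self e⟩).symm

theorem exists_conj_addLeft_mem_zpowers (K : Type*) [DivisionRing K] [Module K V] {e : V}
    (he : e ≠ 0) (v : V) :
    ∃ σ : Perm V, σ⁻¹ * Equiv.addLeft v * σ ∈ Subgroup.zpowers (Equiv.addLeft e) := by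
  rcases eq_or_ne v 0 with rfl | hv
  · exact ⟨1, by simp⟩
  obtain ⟨g, rfl⟩ := exists_linearEquiv_apply_eq K he hv
  refine ⟨g.toAddEquiv.toEquiv, ?_⟩
  rw [show g e = g.toAddEquiv e from rfl, addEquiv_conj_addLeft]
  exact Subgroup.mem_zpowers _

theorem eq_of_addLeft_inv_mul_mem_zpowers {R U : Type*} [AddCommGroup R] [AddCommGroup U]
    {r : R} {w w' : U}
    (h : (Equiv.addLeft ((0, w) : R × U))⁻¹ * Equiv.addLeft (0, w') ∈
      Subgroup.zpowers (Equiv.addLeft ((r, 0) : R × U))) :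
    w = w' := by
  rw [neg_addLeft, ← addLeft_add, addLeft_mem_zpowers_addLeft_iff] at h
  obtain ⟨k, hk⟩ := h
  have := congrArg Prod.snd hk
  simp only [Prod.smul_snd, smul_zero, Prod.snd_add, Prod.snd_neg] at this
  exact neg_add_eq_zero.mp this.symm

end Translations

theorem stmt3_general (M : ℕ) :
    ∃ (Ω : Type) (_ : Fintype Ω) (_ : Nonempty Ω) (G : Subgroup (Equiv.Perm Ω)),
      MulAction.IsPretransitive G Ω ∧
      ∃ (S : Set G) (ω : Ω),
        (∀ x ∈ S, ∀ y ∈ S, ∃ α : Ω, x • α = y • α) ∧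
        S.ncard > M * Nat.card (MulAction.stabilizer G ω) := by
  let V := ZMod 2 × (Fin (M + 1) → ZMod 2)
  let H := Subgroup.zpowers (Equiv.addLeft ((1, 0) : V))
  let T : Set (Perm V) := Set.range fun w => Equiv.addLeft ((0, w) : V)
  let π := toPermHom (Perm V) (Perm V ⧸ H)
  have hT : T.ncard = 2 ^ (M + 1) := by
    rw [Set.ncard_range_of_injective fun w w' h => by
      simpa using congrArg Prod.snd (Equiv.congr_fun h 0)]
    simp [Nat.card_eq_fintype_card]
  have hH : Nat.card H ≤ 2 := card_zpowers_addLeft_le two_ne_zero (by simp [Prod.ext_iff]; rfl)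
  have hinj : Set.InjOn π.rangeRestrict T := by
    refine injOn_rangeRestrict_toPermHom_quotient H ?_
    rintro _ ⟨w, rfl⟩ _ ⟨w', rfl⟩ h
    rw [eq_of_addLeft_inv_mul_mem_zpowers h]
  refine ⟨Perm V ⧸ H, Fintype.ofFinite _, inferInstance, π.range, inferInstance,
    π.rangeRestrict '' T, ((1 : Perm V) : Perm V ⧸ H), ?_, ?_⟩
  · rintro _ ⟨_, ⟨w, rfl⟩, rfl⟩ _ ⟨_, ⟨w', rfl⟩, rfl⟩
    obtain ⟨σ, hσ⟩ := exists_conj_addLeft_mem_zpowers (ZMod 2)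
      (e := ((1, 0) : V)) (by simp) (-(0, w) + (0, w'))
    refine ⟨σ, (smul_coe_eq_smul_coe_iff H _ _ σ).2 ?_⟩
    rwa [neg_addLeft, ← addLeft_add]
  · calc M * Nat.card (stabilizer π.range ((1 : Perm V) : Perm V ⧸ H))
        ≤ M * 2 := by
          gcongr
          exact (card_stabilizer_range_toPermHom_le _).trans (by rwa [stabilizer_quotient])
      _ < 2 ^ (M + 1) := by
          have := Nat.lt_two_pow_self (n := M)
          rw [pow_succ]
          omega
      _ = (π.rangeRestrict '' T).ncard := by rw [hinj.ncard_image, hT]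

/-- For every natural number `M > 0` there exist a finite nonempty
set `Ω`, a transitive permutation group `G ≤ Sym(Ω)`, an intersecting set `S ⊆ G`
and a point `ω ∈ Ω` such that `|S| > M · |G_ω|`. -/
theorem stmt3 (M : ℕ) (hM : 0 < M) :
    ∃ (Ω : Type) (_ : Fintype Ω) (_ : Nonempty Ω) (G : Subgroup (Equiv.Perm Ω)),
      MulAction.IsPretransitive G Ω ∧
      ∃ (S : Set G) (ω : Ω),
        (∀ x ∈ S, ∀ y ∈ S, ∃ α : Ω, x • α = y • α) ∧
        S.ncard > M * Nat.card (MulAction.stabilizer G ω) :=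
  stmt3_general M
end

section
/- Let p be a prime, q = p^d, let K be a finite field with q² elements and F ⊆ K a subfield with q elements. Let G be the group of permutations of K of the form x ↦ a·x + b with a ∈ Kˣ, b ∈ K; let H ≤ G be the subgroup of maps with a ∈ Fˣ and b ∈ F, and S ≤ G the subgroup of maps with a ∈ Fˣ and b ∈ K. Consider the action of G by left multiplication on the coset space Ω = G/H. Then: (a) every element of S is conjugate in G to an element of H, so S is an intersecting set; (b) every intersecting set T ⊆ G satisfies |T| ≤ |S|, i.e. S is a maximum intersecting set; (c) |Ω| = q(q+1) and |S| = q·|H|, so |S| < √|Ω|·|H|. -/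
/-!
Two elements `x, y` of `G` agree at a point of `G ⧸ H` exactly when `x⁻¹ * y` is conjugate
into `H`. The slope `a` of `x ↦ a * x + b` is a homomorphism to the abelian group `Kˣ`, so
conjugation preserves it: all conjugates of `H` lie in `S`, hence an intersecting set lies in the
coset `t • S` of any of its elements `t`. Conversely, an affine map of slope `a ≠ 1` has a fixed
point and is conjugate to `x ↦ a * x`, while a translation `x ↦ x + b` with `b ≠ 0` is conjugate
to `x ↦ x + 1`; for `a ∈ F` both lie in `H`, so `S` is intersecting. The counts
`|G| = (q² - 1) q²`, `|H| = (q - 1) q` and `|S| = (q - 1) q²` give the rest.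
-/

namespace MulAction

def IsIntersecting (G α : Type*) [Group G] [MulAction G α] (T : Set G) : Prop :=
  ∀ x ∈ T, ∀ y ∈ T, ∃ a : α, x • a = y • a

end MulAction

namespace QuotientGroup

open MulAction

variable {G : Type*} [Group G] {H : Subgroup G}

theorem exists_smul_eq_smul_iff (x y : G) :
    (∃ a : G ⧸ H, x • a = y • a) ↔ ∃ g : G, g * (x⁻¹ * y) * g⁻¹ ∈ H := by
  constructor
  · rintro ⟨a, hxy⟩
    obtain ⟨g, rfl⟩ := mk_surjective a
    exact ⟨g⁻¹, by simpa [mul_assoc] using QuotientGroup.eq.mp hxy⟩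
  · rintro ⟨g, hg⟩
    exact ⟨(g⁻¹ : G), QuotientGroup.eq.mpr (by simpa [mul_assoc] using hg)⟩

theorem isIntersecting_of_forall_exists_conj_mem {S : Subgroup G}
    (hS : ∀ s ∈ S, ∃ g : G, g * s * g⁻¹ ∈ H) : IsIntersecting G (G ⧸ H) S :=
  fun x hx y hy => (exists_smul_eq_smul_iff x y).mpr (hS _ (S.mul_mem (S.inv_mem hx) hy))

theorem ncard_le_of_isIntersecting [Finite G] {S : Subgroup G} (hHS : H ≤ S.normalCore)
    {T : Set G} (hT : IsIntersecting G (G ⧸ H) T) : T.ncard ≤ Nat.card S := by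
  obtain rfl | ⟨t, ht⟩ := T.eq_empty_or_nonempty
  · simp
  have hT_sub : T ⊆ (t * ·) '' S := by
    intro x hx
    obtain ⟨g, hg⟩ := (exists_smul_eq_smul_iff x t).mp (hT x hx t ht)
    have hS : x⁻¹ * t ∈ S := by simpa [mul_assoc] using hHS hg g⁻¹
    exact ⟨t⁻¹ * x, by simpa using S.inv_mem hS, by group⟩
  calc T.ncard ≤ ((t * ·) '' (S : Set G)).ncard := Set.ncard_le_ncard hT_sub (Set.toFinite _)
    _ = Nat.card S := by
      rw [Set.ncard_image_of_injective _ (mul_right_injective t), ← Nat.card_coe_set_eq]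
      rfl

end QuotientGroup

def affinePerms (K : Type*) [Field K] : Subgroup (Equiv.Perm K) where
  carrier := {e | ∃ a b : K, a ≠ 0 ∧ ∀ x, e x = a * x + b}
  one_mem' := ⟨1, 0, one_ne_zero, by simp⟩
  mul_mem' := by
    rintro e f ⟨a, b, ha, he⟩ ⟨c, d, hc, hf⟩
    exact ⟨a * c, a * d + b, mul_ne_zero ha hc, fun x => by simp [he, hf]; ring⟩
  inv_mem' := by
    rintro e ⟨a, b, ha, he⟩
    refine ⟨a⁻¹, -(a⁻¹ * b), inv_ne_zero ha, fun x => Equiv.Perm.inv_eq_iff_eq.mpr ?_⟩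
    rw [he]; field_simp; ring

namespace affinePerms

variable {K : Type*} [Field K]

instance : CoeFun (affinePerms K) (fun _ => K → K) := ⟨fun e => (e : Equiv.Perm K)⟩

theorem apply_eq_sub_mul_add (e : affinePerms K) (x : K) : e x = (e 1 - e 0) * x + e 0 := by
  obtain ⟨a, b, -, he⟩ := e.2
  simp only [he]; ring

def slope : affinePerms K →* Kˣ where
  toFun e := Units.mk0 (e 1 - e 0) (sub_ne_zero.mpr ((e : Equiv.Perm K).injective.ne one_ne_zero))
  map_one' := by ext; simp
  map_mul' e f := by
    ext
    change e (f 1) - e (f 0) = (e 1 - e 0) * (f 1 - f 0)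
    rw [apply_eq_sub_mul_add e (f 1), apply_eq_sub_mul_add e (f 0)]
    ring

theorem coe_slope (e : affinePerms K) : (slope e : K) = e 1 - e 0 := rfl

theorem apply_eq (e : affinePerms K) (x : K) : e x = slope e * x + e 0 :=
  apply_eq_sub_mul_add e x

theorem exists_apply_eq_iff (e : affinePerms K) (P : K → K → Prop) :
    (∃ a b : K, P a b ∧ ∀ x, e x = a * x + b) ↔ P (slope e) (e 0) := by
  refine ⟨?_, fun h => ⟨_, _, h, apply_eq e⟩⟩
  rintro ⟨a, b, hab, he⟩
  convert hab using 1 <;> simp [coe_slope, he]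

theorem ext_of_slope_eq {e f : affinePerms K} (h : slope e = slope f) (h0 : e 0 = f 0) :
    e = f :=
  Subtype.ext (Equiv.ext fun x => by
    change e x = f x
    rw [apply_eq e, apply_eq f, h, h0])

theorem slope_conj (g e : affinePerms K) : slope (g * e * g⁻¹) = slope e := by
  rw [map_mul, map_mul, map_inv, mul_inv_cancel_comm]

def mk (a : Kˣ) (b : K) : affinePerms K :=
  ⟨(Units.mulLeft a).trans (Equiv.addRight b), a, b, a.ne_zero, fun _ => rfl⟩

@[simp]
theorem mk_apply (a : Kˣ) (b x : K) : mk a b x = a * x + b := rfl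

@[simp]
theorem slope_mk (a : Kˣ) (b : K) : slope (mk a b) = a :=
  Units.ext (by simp [coe_slope])

theorem conj_apply_apply (g e : affinePerms K) (x : K) : (g * e * g⁻¹) (g x) = g (e x) := by
  simp

theorem apply_self_of_slope_ne_one (e : affinePerms K) (he : (slope e : K) ≠ 1) :
    e (e 0 / (1 - slope e)) = e 0 / (1 - slope e) := by
  have : 1 - (slope e : K) ≠ 0 := sub_ne_zero.mpr he.symm
  rw [apply_eq e]
  field_simp
  ring

theorem exists_conj_apply_zero_eq_zero_or_one (e : affinePerms K) :
    ∃ g : affinePerms K, (g * e * g⁻¹) 0 = 0 ∨ (g * e * g⁻¹) 0 = 1 := by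
  by_cases he : (slope e : K) = 1
  · by_cases h0 : e 0 = 0
    · exact ⟨1, .inl (by simpa using h0)⟩
    · set g := mk (Units.mk0 _ (inv_ne_zero h0)) 0
      have hg := conj_apply_apply g e 0
      rw [show g 0 = 0 by simp [g]] at hg
      exact ⟨g, .inr (hg.trans (by simp [g, h0]))⟩
  · set t := e 0 / (1 - slope e)
    set g := mk 1 (-t)
    have hg := conj_apply_apply g e t
    rw [apply_self_of_slope_ne_one e he, show g t = 0 by simp [g]] at hg
    exact ⟨g, .inl hg⟩

theorem card_eq_of_forall_mem_iff (S : Subgroup (affinePerms K)) {A : Set K} [Finite A]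
    (hA : 0 ∈ A) (B : Set K) (hS : ∀ e, e ∈ S ↔ (slope e : K) ∈ A ∧ e 0 ∈ B) :
    Nat.card S = (Nat.card A - 1) * Nat.card B := by
  have hS' : ∀ e, e ∈ S ↔ (slope e : K) ∈ A \ {0} ∧ e 0 ∈ B := fun e => by
    simp [hS, Units.ne_zero]
  rw [Nat.card_coe_set_eq A, ← Set.ncard_sdiff_singleton_of_mem hA, ← Nat.card_coe_set_eq,
    ← Nat.card_prod]
  refine Nat.card_eq_of_bijective
    (fun e => (⟨slope e.1, ((hS' e).mp e.2).1⟩, ⟨e.1 0, ((hS' e).mp e.2).2⟩)) ⟨?_, ?_⟩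
  · rintro e f hef
    simp only [Prod.mk.injEq, Subtype.mk.injEq] at hef
    exact Subtype.ext (ext_of_slope_eq (Units.ext hef.1) hef.2)
  · rintro ⟨⟨a, ha, ha0 : a ≠ 0⟩, ⟨b, hb⟩⟩
    exact ⟨⟨mk (Units.mk0 a ha0) b, (hS _).mpr (by simpa using ⟨ha, hb⟩)⟩, by ext <;> simp⟩

theorem card_eq [Finite K] : Nat.card (affinePerms K) = (Nat.card K - 1) * Nat.card K := by
  rw [← Subgroup.card_top, card_eq_of_forall_mem_iff ⊤ (Set.mem_univ 0) Set.univ (by simp),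
    Nat.card_univ]

section Subfield

variable {F : Subfield K} {H S : Subgroup (affinePerms K)}

theorem normal_of_forall_mem_iff (hS : ∀ e, e ∈ S ↔ (slope e : K) ∈ F) : S.Normal :=
  ⟨fun e he g => (hS _).mpr (slope_conj g e ▸ (hS e).mp he)⟩

theorem le_normalCore_of_forall_mem_iff (hH : ∀ e, e ∈ H ↔ (slope e : K) ∈ F ∧ e 0 ∈ F)
    (hS : ∀ e, e ∈ S ↔ (slope e : K) ∈ F) : H ≤ S.normalCore := by
  have := normal_of_forall_mem_iff hS
  rw [S.normalCore_eq_self]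
  exact fun e he => (hS e).mpr ((hH e).mp he).1

theorem exists_conj_mem_of_forall_mem_iff (hH : ∀ e, e ∈ H ↔ (slope e : K) ∈ F ∧ e 0 ∈ F)
    (hS : ∀ e, e ∈ S ↔ (slope e : K) ∈ F) : ∀ s ∈ S, ∃ g, g * s * g⁻¹ ∈ H := by
  intro s hs
  obtain ⟨g, hg⟩ := exists_conj_apply_zero_eq_zero_or_one s
  refine ⟨g, (hH _).mpr ⟨slope_conj g s ▸ (hS s).mp hs, ?_⟩⟩
  rcases hg with hg | hg <;> rw [hg]
  exacts [F.zero_mem, F.one_mem]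

variable [Finite K]

theorem card_eq_of_forall_mem_iff_slope_mem_and_apply_zero_mem
    (hH : ∀ e, e ∈ H ↔ (slope e : K) ∈ F ∧ e 0 ∈ F) :
    Nat.card H = (Nat.card F - 1) * Nat.card F :=
  card_eq_of_forall_mem_iff H F.zero_mem F hH

theorem card_eq_of_forall_mem_iff_slope_mem (hS : ∀ e, e ∈ S ↔ (slope e : K) ∈ F) :
    Nat.card S = (Nat.card F - 1) * Nat.card K := by
  rw [card_eq_of_forall_mem_iff S F.zero_mem Set.univ (by simpa using hS), Nat.card_univ]
  rfl

theorem card_quotient_eq (hH : ∀ e, e ∈ H ↔ (slope e : K) ∈ F ∧ e 0 ∈ F)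
    (hK : Nat.card K = Nat.card F ^ 2) :
    Nat.card (affinePerms K ⧸ H) = Nat.card F * (Nat.card F + 1) := by
  have hq : 1 < Nat.card F := Finite.one_lt_card_iff_nontrivial.mpr inferInstance
  have h := H.card_eq_card_quotient_mul_card_subgroup
  rw [card_eq, card_eq_of_forall_mem_iff_slope_mem_and_apply_zero_mem hH, hK,
    show Nat.card F ^ 2 - 1 = (Nat.card F + 1) * (Nat.card F - 1) by
      simpa using Nat.sq_sub_sq (Nat.card F) 1] at h
  exact Nat.eq_of_mul_eq_mul_right (Nat.mul_pos (by omega) (by omega)) (h.symm.trans (by ring))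

end Subfield

end affinePerms

theorem natCast_lt_sqrt_mul_succ {q : ℕ} (hq : 0 < q) : (q : ℝ) < √(q * (q + 1) : ℕ) := by
  have : (0 : ℝ) < q := by exact_mod_cast hq
  rw [Real.lt_sqrt (by positivity)]
  push_cast
  nlinarith

open affinePerms in
theorem stmt4_general (q : ℕ)
    (K : Type*) [Field K] [Fintype K] (hK : Fintype.card K = q ^ 2)
    (F : Subfield K) (hF : Nat.card F = q)
    (G : Subgroup (Equiv.Perm K))
    (hG : ∀ e : Equiv.Perm K, e ∈ G ↔ ∃ a b : K, a ≠ 0 ∧ ∀ x, e x = a * x + b)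
    (H S : Subgroup G)
    (hH : ∀ e : G, e ∈ H ↔
      ∃ a b : K, a ∈ F ∧ b ∈ F ∧ a ≠ 0 ∧ ∀ x, (e : Equiv.Perm K) x = a * x + b)
    (hS : ∀ e : G, e ∈ S ↔
      ∃ a b : K, a ∈ F ∧ a ≠ 0 ∧ ∀ x, (e : Equiv.Perm K) x = a * x + b) :
    (∀ s ∈ S, ∃ g : G, g * s * g⁻¹ ∈ H) ∧
    (∀ x ∈ (S : Set G), ∀ y ∈ (S : Set G), ∃ α : G ⧸ H, x • α = y • α) ∧
    (∀ T : Set G, (∀ x ∈ T, ∀ y ∈ T, ∃ α : G ⧸ H, x • α = y • α) →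
        T.ncard ≤ Nat.card S) ∧
    Nat.card (G ⧸ H) = q * (q + 1) ∧
    Nat.card S = q * Nat.card H ∧
    (Nat.card S : ℝ) < Real.sqrt (Nat.card (G ⧸ H)) * (Nat.card H : ℝ) := by
  obtain rfl : G = affinePerms K := SetLike.ext hG
  have memH : ∀ e, e ∈ H ↔ (slope e : K) ∈ F ∧ e 0 ∈ F := fun e => by
    simp only [hH, ← and_assoc, exists_apply_eq_iff e (fun a b => (a ∈ F ∧ b ∈ F) ∧ a ≠ 0),
      ne_eq, Units.ne_zero, not_false_eq_true, and_true]
  have memS : ∀ e, e ∈ S ↔ (slope e : K) ∈ F := fun e => by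
    simp only [hS, ← and_assoc, exists_apply_eq_iff e (fun a _ => a ∈ F ∧ a ≠ 0),
      ne_eq, Units.ne_zero, not_false_eq_true, and_true]
  have hK' : Nat.card K = Nat.card F ^ 2 := by rw [Nat.card_eq_fintype_card, hK, hF]
  have conjH := exists_conj_mem_of_forall_mem_iff memH memS
  have cardQ : Nat.card (affinePerms K ⧸ H) = q * (q + 1) := hF ▸ card_quotient_eq memH hK'
  have cardSH : Nat.card S = q * Nat.card H := by
    rw [card_eq_of_forall_mem_iff_slope_mem memS,
      card_eq_of_forall_mem_iff_slope_mem_and_apply_zero_mem memH, hK', hF]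
    ring
  refine ⟨conjH, QuotientGroup.isIntersecting_of_forall_exists_conj_mem conjH,
    fun _ => QuotientGroup.ncard_le_of_isIntersecting (le_normalCore_of_forall_mem_iff memH memS),
    cardQ, cardSH, ?_⟩
  rw [cardQ, cardSH, Nat.cast_mul]
  exact mul_lt_mul_of_pos_right (natCast_lt_sqrt_mul_succ (hF ▸ Nat.card_pos))
    (by exact_mod_cast Nat.card_pos)

/-- Let `p` be a prime, `q = p^d`, `K` a finite field with `q²`
elements and `F ⊆ K` a subfield with `q` elements.  Let `G` be the group of
permutations of `K` of the form `x ↦ a·x + b` with `a ∈ Kˣ`, `b ∈ K`, let `H ≤ G`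
be the subgroup of maps with `a ∈ Fˣ`, `b ∈ F`, and `S ≤ G` the subgroup of maps
with `a ∈ Fˣ`, `b ∈ K`, with `G` acting by left multiplication on `Ω = G ⧸ H`.
Then: (a) every element of `S` is conjugate in `G` to an element of `H`, so `S` is
an intersecting set; (b) every intersecting set `T ⊆ G` satisfies `|T| ≤ |S|`;
(c) `|Ω| = q(q+1)` and `|S| = q·|H|`, so `|S| < √|Ω|·|H|`. -/
theorem stmt4 (p d : ℕ) (hp : p.Prime) (hd : 0 < d) (q : ℕ) (hq : q = p ^ d)
    (K : Type*) [Field K] [Fintype K] (hK : Fintype.card K = q ^ 2)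
    (F : Subfield K) (hF : Nat.card F = q)
    (G : Subgroup (Equiv.Perm K))
    (hG : ∀ e : Equiv.Perm K, e ∈ G ↔ ∃ a b : K, a ≠ 0 ∧ ∀ x, e x = a * x + b)
    (H S : Subgroup G)
    (hH : ∀ e : G, e ∈ H ↔
      ∃ a b : K, a ∈ F ∧ b ∈ F ∧ a ≠ 0 ∧ ∀ x, (e : Equiv.Perm K) x = a * x + b)
    (hS : ∀ e : G, e ∈ S ↔
      ∃ a b : K, a ∈ F ∧ a ≠ 0 ∧ ∀ x, (e : Equiv.Perm K) x = a * x + b) :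
    (∀ s ∈ S, ∃ g : G, g * s * g⁻¹ ∈ H) ∧
    (∀ x ∈ (S : Set G), ∀ y ∈ (S : Set G), ∃ α : G ⧸ H, x • α = y • α) ∧
    (∀ T : Set G, (∀ x ∈ T, ∀ y ∈ T, ∃ α : G ⧸ H, x • α = y • α) →
        T.ncard ≤ Nat.card S) ∧
    Nat.card (G ⧸ H) = q * (q + 1) ∧
    Nat.card S = q * Nat.card H ∧
    (Nat.card S : ℝ) < Real.sqrt (Nat.card (G ⧸ H)) * (Nat.card H : ℝ) :=
  stmt4_general q K hK F hF G hG H S hH hS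
end

section
/- For every natural number M > 0 and every real ε with 0 < ε < 1, there exist a finite nonempty set Ω and a transitive permutation group G ≤ Sym(Ω) such that |Ω| is not a perfect power (there are no integers n and m ≥ 2 with |Ω| = n^m, hence G admits no product decomposition), and the maximum size s of an intersecting set in G satisfies s > M·|G_ω| and (1−ε)·√|Ω|·|G_ω| < s < √|Ω|·|G_ω|, where G_ω is a point stabilizer. -/
/-!
Let `G = AGL(1, p²)` act on the cosets of `AGL(1, p)`: there are `p (p + 1)` of them, and a
point stabilizer has order `(p - 1) p`. Conjugating into `AGL(1, p)` preserves the multiplier, so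
`x ↦ a x + b` fixes a coset exactly when `a ∈ 𝔽_p`; these elements form a subgroup `N` of order
`(p - 1) p² = p |G_ω|`. Since `x` and `y` agree somewhere iff `y⁻¹ x` fixes a point, every
intersecting set lies in a coset of `N`, and `N` itself is intersecting, so `s = p |G_ω|`.
Now `p < √(p (p + 1)) < p + 1`, and `p (p + 1)` is not a perfect power because `p` divides it
exactly once; taking the prime `p` larger than `M` and `1 / ε` gives the bounds.
-/

open MulAction

section Intersecting

variable {G : Type*} (Ω : Type*) [Group G] [MulAction G Ω]

def IsIntersecting (S : Set G) : Prop :=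
  ∀ x ∈ S, ∀ y ∈ S, ∃ α : Ω, x • α = y • α

variable {Ω}

theorem isIntersecting_subgroup {N : Subgroup G} (hN : ∀ g ∈ N, ∃ α : Ω, g • α = α) :
    IsIntersecting Ω (N : Set G) := by
  intro x hx y hy
  obtain ⟨α, hα⟩ := hN (y⁻¹ * x) (mul_mem (inv_mem hy) hx)
  exact ⟨α, by rwa [mul_smul, inv_smul_eq_iff] at hα⟩

open Pointwise in
theorem IsIntersecting.ncard_le [Finite G] {N : Subgroup G}
    (hN : ∀ g : G, (∃ α : Ω, g • α = α) → g ∈ N) {S : Set G} (hS : IsIntersecting Ω S) :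
    S.ncard ≤ Nat.card N := by
  obtain rfl | ⟨x₀, hx₀⟩ := S.eq_empty_or_nonempty
  · simp
  have hsub : S ⊆ x₀ • (N : Set G) := fun x hx ↦ by
    obtain ⟨α, hα⟩ := hS x hx x₀ hx₀
    refine Set.mem_smul_set_iff_inv_smul_mem.mpr (hN _ ⟨α, ?_⟩)
    rw [smul_eq_mul, mul_smul, hα, inv_smul_smul]
  calc S.ncard ≤ (x₀ • (N : Set G)).ncard := Set.ncard_le_ncard hsub (Set.toFinite _)
    _ = Nat.card N := by rw [Set.ncard_smul_set]; exact (Nat.card_coe_set_eq _).symm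

end Intersecting

section PermGroup

variable {G Ω : Type*} [Group G] [MulAction G Ω] [FaithfulSMul G Ω]

open Equiv.Perm (subgroupOfMulAction)

theorem subgroupOfMulAction_smul (g : G) (α : Ω) : subgroupOfMulAction G Ω g • α = g • α := rfl

instance [IsPretransitive G Ω] : IsPretransitive (toPermHom G Ω).range Ω where
  exists_smul_eq α β :=
    let ⟨g, hg⟩ := exists_smul_eq G α β
    ⟨subgroupOfMulAction G Ω g, hg⟩

theorem exists_smul_eq_self_iff_mem_map {N : Subgroup G}
    (hN : ∀ g : G, (∃ α : Ω, g • α = α) ↔ g ∈ N) (x : (toPermHom G Ω).range) :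
    (∃ α : Ω, x • α = α) ↔ x ∈ N.map (subgroupOfMulAction G Ω).toMonoidHom := by
  rw [Subgroup.mem_map_equiv, ← hN, ← (subgroupOfMulAction G Ω).apply_symm_apply x]
  simp only [subgroupOfMulAction_smul, MulEquiv.symm_apply_apply]

theorem isGreatest_ncard_isIntersecting_range [Finite G] {N : Subgroup G}
    (hN : ∀ g : G, (∃ α : Ω, g • α = α) ↔ g ∈ N) :
    IsGreatest {k | ∃ S : Set (toPermHom G Ω).range, IsIntersecting Ω S ∧ S.ncard = k}
      (Nat.card N) := by
  have := Finite.of_equiv _ (subgroupOfMulAction G Ω).toEquiv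
  have hN' := exists_smul_eq_self_iff_mem_map hN
  have hcard := Subgroup.card_map_of_injective (K := N)
    (f := (subgroupOfMulAction G Ω).toMonoidHom) (subgroupOfMulAction G Ω).injective
  refine ⟨⟨_, isIntersecting_subgroup fun x hx ↦ (hN' x).mpr hx, ?_⟩, ?_⟩
  · exact (Nat.card_coe_set_eq _).symm.trans hcard
  · rintro _ ⟨S, hS, rfl⟩
    exact (hS.ncard_le fun x ↦ (hN' x).mp).trans_eq hcard

theorem card_stabilizer_range_toPermHom {H : Subgroup G} [Finite (G ⧸ H)]
    [FaithfulSMul G (G ⧸ H)] (ω : G ⧸ H) :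
    Nat.card (stabilizer (toPermHom G (G ⧸ H)).range ω) = Nat.card H := by
  have h := (stabilizer (toPermHom G (G ⧸ H)).range ω).index_mul_card
  rw [index_stabilizer_of_transitive, ← Nat.card_congr (subgroupOfMulAction G (G ⧸ H)).toEquiv,
    H.card_eq_card_quotient_mul_card_subgroup] at h
  exact Nat.eq_of_mul_eq_mul_left Nat.card_pos h

end PermGroup

namespace Subfield

variable {K : Type*} [Field K] (F : Subfield K)

def subtypeUnitsEquivUnits : {u : Kˣ // (u : K) ∈ F} ≃ Fˣ where
  toFun u := Units.mk0 ⟨u.1, u.2⟩ (Subtype.coe_ne_coe.mp u.1.ne_zero)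
  invFun u := ⟨Units.map F.subtype.toMonoidHom u, u.1.2⟩
  left_inv _ := by ext; rfl
  right_inv _ := by ext; rfl

theorem card_subtype_units : Nat.card {u : Kˣ // (u : K) ∈ F} = Nat.card F - 1 := by
  rw [Nat.card_congr F.subtypeUnitsEquivUnits, Nat.card_units]

variable {F} in
theorem ne_top_of_card_lt (h : Nat.card F < Nat.card K) : F ≠ ⊤ := by
  rintro rfl
  exact h.ne (Nat.card_congr topEquiv.toEquiv)

end Subfield

/-- `⟨a, b⟩` stands for the affine map `x ↦ a * x + b` of `K`. -/
@[ext] structure AGL1 (K : Type*) [Field K] where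
  a : Kˣ
  b : K

namespace AGL1

variable {K : Type*} [Field K]

instance : Mul (AGL1 K) := ⟨fun x y ↦ ⟨x.a * y.a, x.a * y.b + x.b⟩⟩
instance : One (AGL1 K) := ⟨⟨1, 0⟩⟩
instance : Inv (AGL1 K) := ⟨fun x ↦ ⟨x.a⁻¹, -((x.a : K)⁻¹ * x.b)⟩⟩

@[simp] theorem mul_a (x y : AGL1 K) : (x * y).a = x.a * y.a := rfl
@[simp] theorem mul_b (x y : AGL1 K) : (x * y).b = x.a * y.b + x.b := rfl
@[simp] theorem one_a : (1 : AGL1 K).a = 1 := rfl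
@[simp] theorem one_b : (1 : AGL1 K).b = 0 := rfl
@[simp] theorem inv_a (x : AGL1 K) : x⁻¹.a = x.a⁻¹ := rfl
@[simp] theorem inv_b (x : AGL1 K) : x⁻¹.b = -((x.a : K)⁻¹ * x.b) := rfl

instance : Group (AGL1 K) where
  mul_assoc x y z := by ext <;> simp [mul_assoc, mul_add, add_assoc]
  one_mul x := by ext <;> simp
  mul_one x := by ext <;> simp
  inv_mul_cancel x := by ext <;> simp

theorem inv_mul_mul_a (g x : AGL1 K) : (x⁻¹ * g * x).a = g.a := by
  simp [mul_comm]

theorem inv_mul_mul_b (g x : AGL1 K) :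
    (x⁻¹ * g * x).b = (x.a : K)⁻¹ * (g.a * x.b + g.b - x.b) := by
  simp; ring

variable (F : Subfield K)

def ofSubfield : Subgroup (AGL1 K) where
  carrier := {g | (g.a : K) ∈ F ∧ g.b ∈ F}
  mul_mem' := fun ⟨hxa, hxb⟩ ⟨hya, hyb⟩ ↦ ⟨mul_mem hxa hya, add_mem (mul_mem hxa hyb) hxb⟩
  one_mem' := ⟨one_mem F, zero_mem F⟩
  inv_mem' := fun ⟨ha, hb⟩ ↦
    ⟨by simpa using inv_mem ha, by simpa using neg_mem (mul_mem (inv_mem ha) hb)⟩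

def multiplierIn : Subgroup (AGL1 K) where
  carrier := {g | (g.a : K) ∈ F}
  mul_mem' {x y} (hx : (x.a : K) ∈ F) (hy : (y.a : K) ∈ F) := mul_mem hx hy
  one_mem' := one_mem F
  inv_mem' {x} (hx : (x.a : K) ∈ F) := by simpa using inv_mem hx

variable {F}

theorem smul_mk_eq_mk_iff (g x : AGL1 K) :
    g • (x : AGL1 K ⧸ ofSubfield F) = x ↔
      (g.a : K) ∈ F ∧ (x.a : K)⁻¹ * (g.a * x.b + g.b - x.b) ∈ F := by
  rw [MulAction.Quotient.smul_mk, smul_eq_mul, QuotientGroup.eq, ← inv_mem_iff,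
    show ((g * x)⁻¹ * x)⁻¹ = x⁻¹ * g * x by group]
  exact and_congr (by rw [inv_mul_mul_a]) (by rw [inv_mul_mul_b])

theorem exists_smul_eq_self_iff (g : AGL1 K) :
    (∃ ω : AGL1 K ⧸ ofSubfield F, g • ω = ω) ↔ g ∈ multiplierIn F := by
  constructor
  · rintro ⟨ω, hω⟩
    induction ω using QuotientGroup.induction_on with
    | H x => exact ((smul_mk_eq_mk_iff g x).mp hω).1
  intro hg
  by_cases ha : g.a = 1
  · by_cases hb : g.b = 0
    · exact ⟨(1 : AGL1 K), by rw [show g = 1 from AGL1.ext ha hb, one_smul]⟩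
    -- the translation by `b` fixes the coset of `x ↦ b x`
    refine ⟨(⟨Units.mk0 g.b hb, 0⟩ : AGL1 K), (smul_mk_eq_mk_iff _ _).mpr ⟨hg, ?_⟩⟩
    simp [ha, hb]
  · -- `g` fixes the point `b / (1 - a)` of `K`
    have h1 : (1 : K) - g.a ≠ 0 := sub_ne_zero.mpr fun h ↦ ha (Units.ext h.symm)
    refine ⟨(⟨1, g.b / (1 - g.a)⟩ : AGL1 K), (smul_mk_eq_mk_iff _ _).mpr ⟨hg, ?_⟩⟩
    convert zero_mem F
    field_simp
    ring

theorem faithfulSMul_quotient (hF : F ≠ ⊤) :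
    FaithfulSMul (AGL1 K) (AGL1 K ⧸ ofSubfield F) := by
  obtain ⟨u, hu⟩ := SetLike.exists_not_mem_of_ne_top F hF
  have hu0 : u ≠ 0 := by rintro rfl; exact hu (zero_mem F)
  refine faithfulSMul_iff.mpr fun g hg ↦ ?_
  have fix (x : AGL1 K) := ((smul_mk_eq_mk_iff g x).mp (hg x)).2
  have hb : g.b = 0 := by
    by_contra hb
    apply hu
    convert fix ⟨Units.mk0 (g.b / u) (div_ne_zero hb hu0), 0⟩ using 1
    simp only [Units.val_mk0]
    field_simp
    simp
  have ha : g.a = 1 := by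
    by_contra ha
    have h1 : (g.a : K) - 1 ≠ 0 := sub_ne_zero.mpr fun h ↦ ha (Units.ext h)
    apply hu
    convert fix ⟨1, u / (g.a - 1)⟩ using 1
    field_simp
    simp [hb]
    ring
  exact AGL1.ext ha hb

def equivProd : AGL1 K ≃ Kˣ × K where
  toFun x := (x.a, x.b)
  invFun y := ⟨y.1, y.2⟩
  left_inv _ := rfl
  right_inv _ := rfl

instance [Finite K] : Finite (AGL1 K) := Finite.of_equiv _ equivProd.symm

theorem card_eq : Nat.card (AGL1 K) = (Nat.card K - 1) * Nat.card K := by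
  rw [Nat.card_congr equivProd, Nat.card_prod, Nat.card_units]

theorem card_ofSubfield : Nat.card (ofSubfield F) = (Nat.card F - 1) * Nat.card F := by
  let e : ofSubfield F ≃ {u : Kˣ // (u : K) ∈ F} × F :=
    ⟨fun g ↦ (⟨g.1.a, g.2.1⟩, ⟨g.1.b, g.2.2⟩), fun y ↦ ⟨⟨y.1, y.2⟩, y.1.2, y.2.2⟩,
      fun _ ↦ rfl, fun _ ↦ rfl⟩
  rw [Nat.card_congr e, Nat.card_prod, F.card_subtype_units]

theorem card_multiplierIn : Nat.card (multiplierIn F) = (Nat.card F - 1) * Nat.card K := by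
  let e : multiplierIn F ≃ {u : Kˣ // (u : K) ∈ F} × K :=
    ⟨fun g ↦ (⟨g.1.a, g.2⟩, g.1.b), fun y ↦ ⟨⟨y.1, y.2⟩, y.1.2⟩, fun _ ↦ rfl, fun _ ↦ rfl⟩
  rw [Nat.card_congr e, Nat.card_prod, F.card_subtype_units]

theorem card_multiplierIn_of_card_eq_sq (hK : Nat.card K = Nat.card F ^ 2) :
    Nat.card (multiplierIn F) = Nat.card F * Nat.card (ofSubfield F) := by
  rw [card_multiplierIn, card_ofSubfield, hK]
  ring

theorem card_quotient_ofSubfield [Finite K] (hK : Nat.card K = Nat.card F ^ 2) :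
    Nat.card (AGL1 K ⧸ ofSubfield F) = Nat.card F * (Nat.card F + 1) := by
  have h := (ofSubfield F).card_eq_card_quotient_mul_card_subgroup
  rw [card_eq, card_ofSubfield, hK] at h
  have hF : 1 < Nat.card F := Finite.one_lt_card
  refine (Nat.eq_of_mul_eq_mul_right (m := (Nat.card F - 1) * Nat.card F)
    (Nat.mul_pos (by omega) (by omega)) ?_).symm
  rw [← h]
  zify [hF.le, Nat.one_le_pow 2 _ (by omega : 0 < Nat.card F)]
  ring

end AGL1

theorem card_fieldRange_algebraMap_galoisField (p n : ℕ) [Fact p.Prime] :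
    Nat.card (algebraMap (ZMod p) (GaloisField p n)).fieldRange = p := by
  rw [← SetLike.coe_sort_coe, RingHom.coe_fieldRange,
    Nat.card_range_of_injective (algebraMap (ZMod p) _).injective, Nat.card_zmod]

theorem exists_subfield_card_eq_sq (p : ℕ) [Fact p.Prime] :
    ∃ (K : Type) (_ : Field K) (_ : Finite K) (F : Subfield K),
      Nat.card F = p ∧ Nat.card K = Nat.card F ^ 2 :=
  ⟨GaloisField p 2, inferInstance, inferInstance, _, card_fieldRange_algebraMap_galoisField p 2,
    by rw [card_fieldRange_algebraMap_galoisField, GaloisField.card p 2 two_ne_zero]⟩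

theorem Nat.Prime.mul_add_one_ne_pow {p : ℕ} (hp : p.Prime) {m : ℕ} (hm : 2 ≤ m) (n : ℕ) :
    p * (p + 1) ≠ n ^ m := by
  intro h
  have hpn : p ∣ n := hp.dvd_of_dvd_pow (h ▸ dvd_mul_right p (p + 1))
  have hp2 : p * p ∣ p * (p + 1) :=
    h ▸ (pow_two p ▸ pow_dvd_pow_of_dvd hpn 2).trans (pow_dvd_pow n hm)
  exact hp.not_dvd_one ((Nat.dvd_add_right dvd_rfl).mp (Nat.dvd_of_mul_dvd_mul_left hp.pos hp2))

theorem lt_sqrt_mul_add_one {x : ℝ} (hx : 0 < x) : x < √(x * (x + 1)) :=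
  Real.lt_sqrt_of_sq_lt (by nlinarith)

theorem sqrt_mul_add_one_lt {x : ℝ} (hx : 0 ≤ x) : √(x * (x + 1)) < x + 1 :=
  (Real.sqrt_lt' (by linarith)).mpr (by nlinarith)

theorem one_sub_mul_sqrt_mul_add_one_lt {x ε : ℝ} (hx : 0 < x) (hεx : 1 < ε * x) :
    (1 - ε) * √(x * (x + 1)) < x := by
  have hε : 0 < ε := pos_of_mul_pos_left (one_pos.trans hεx) hx.le
  have h1 := lt_sqrt_mul_add_one hx
  have h2 := sqrt_mul_add_one_lt hx.le
  nlinarith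

open AGL1 in
theorem stmt5_general (M : ℕ) (ε : ℝ) (hε0 : 0 < ε) :
    ∃ (Ω : Type) (_ : Fintype Ω) (_ : Nonempty Ω) (G : Subgroup (Equiv.Perm Ω)),
      MulAction.IsPretransitive G Ω ∧
      (¬ ∃ n m : ℕ, 2 ≤ m ∧ Nat.card Ω = n ^ m) ∧
      ∃ (ω : Ω) (s : ℕ),
        (∃ S : Set G, (∀ x ∈ S, ∀ y ∈ S, ∃ α : Ω, x • α = y • α) ∧ S.ncard = s) ∧
        (∀ S : Set G, (∀ x ∈ S, ∀ y ∈ S, ∃ α : Ω, x • α = y • α) → S.ncard ≤ s) ∧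
        s > M * Nat.card (MulAction.stabilizer G ω) ∧
        (1 - ε) * Real.sqrt (Nat.card Ω) * (Nat.card (MulAction.stabilizer G ω) : ℝ) < (s : ℝ) ∧
        (s : ℝ) < Real.sqrt (Nat.card Ω) * (Nat.card (MulAction.stabilizer G ω) : ℝ) := by
  obtain ⟨k, hk⟩ := exists_nat_gt (1 / ε)
  obtain ⟨p, hp_ge, hp⟩ := Nat.exists_infinite_primes (max M k + 1)
  have : Fact p.Prime := ⟨hp⟩
  have hp0 : (0 : ℝ) < p := by exact_mod_cast hp.pos
  have hεp : 1 < ε * p := by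
    rw [mul_comm, ← div_lt_iff₀ hε0]
    exact hk.trans (by exact_mod_cast (by omega : k < p))
  obtain ⟨K, _, _, F, hF, hK⟩ := exists_subfield_card_eq_sq p
  have := faithfulSMul_quotient (Subfield.ne_top_of_card_lt (F := F) (by nlinarith [hp.two_le]))
  have hmax := isGreatest_ncard_isIntersecting_range (exists_smul_eq_self_iff (F := F))
  have hH : (0 : ℝ) < Nat.card (ofSubfield F) := by exact_mod_cast Nat.card_pos
  let Ω := AGL1 K ⧸ ofSubfield F
  refine ⟨Ω, Fintype.ofFinite Ω, ⟨(1 : AGL1 K)⟩, (toPermHom (AGL1 K) Ω).range, inferInstance,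
    fun ⟨n, m, hm, h⟩ ↦ hp.mul_add_one_ne_pow hm n (by rwa [card_quotient_ofSubfield hK, hF] at h),
    (1 : AGL1 K), _, hmax.1, fun S hS ↦ hmax.2 ⟨S, hS, rfl⟩, ?_, ?_, ?_⟩ <;>
    rw [card_multiplierIn_of_card_eq_sq hK, card_stabilizer_range_toPermHom, hF] <;>
    try rw [card_quotient_ofSubfield hK, hF]
  · exact Nat.mul_lt_mul_of_pos_right (by omega) Nat.card_pos
  · push_cast
    exact mul_lt_mul_of_pos_right (one_sub_mul_sqrt_mul_add_one_lt hp0 hεp) hH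
  · push_cast
    exact mul_lt_mul_of_pos_right (lt_sqrt_mul_add_one hp0) hH

/-- For every `M > 0` and every real `ε ∈ (0,1)` there exist a
finite nonempty set `Ω` and a transitive permutation group `G ≤ Sym(Ω)` such that
`|Ω|` is not a perfect power (hence `G` admits no product decomposition), and the
maximum size `s` of an intersecting set in `G` satisfies `s > M·|G_ω|` and
`(1-ε)·√|Ω|·|G_ω| < s < √|Ω|·|G_ω|` for a point stabilizer `G_ω`. -/
theorem stmt5 (M : ℕ) (hM : 0 < M) (ε : ℝ) (hε0 : 0 < ε) (hε1 : ε < 1) :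
    ∃ (Ω : Type) (_ : Fintype Ω) (_ : Nonempty Ω) (G : Subgroup (Equiv.Perm Ω)),
      MulAction.IsPretransitive G Ω ∧
      (¬ ∃ n m : ℕ, 2 ≤ m ∧ Nat.card Ω = n ^ m) ∧
      ∃ (ω : Ω) (s : ℕ),
        (∃ S : Set G, (∀ x ∈ S, ∀ y ∈ S, ∃ α : Ω, x • α = y • α) ∧ S.ncard = s) ∧
        (∀ S : Set G, (∀ x ∈ S, ∀ y ∈ S, ∃ α : Ω, x • α = y • α) → S.ncard ≤ s) ∧
        s > M * Nat.card (MulAction.stabilizer G ω) ∧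
        (1 - ε) * Real.sqrt (Nat.card Ω) * (Nat.card (MulAction.stabilizer G ω) : ℝ) < (s : ℝ) ∧
        (s : ℝ) < Real.sqrt (Nat.card Ω) * (Nat.card (MulAction.stabilizer G ω) : ℝ) :=
  stmt5_general M ε hε0
end

section
/- Let ℓ be a prime, let G be a group acting on a set Ω, and let S ≤ G be a subgroup every element of which fixes some point of Ω. Then for every function f : ZMod ℓ → S and every m ∈ ZMod ℓ, there exists a function π : ZMod ℓ → Ω such that f(i−m)·π(i−m) = π(i) for all i ∈ ZMod ℓ. (Equivalently, every element (f; m) of the wreath product S ≀ ZMod ℓ fixes a point of Ω^{ZMod ℓ}, so S ≀ ZMod ℓ is an intersecting subgroup of G ≀ ZMod ℓ.) -/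
/-!
Write `c k = f((k-1)m) ⋯ f(m) f(0)` for the products of `f` along the orbit of `m`. If `m`
generates the cyclic group and has order `n`, then `c n ∈ S` fixes some `α`, and since
`k ↦ f (k • m)` is `n`-periodic, `c (k + n) = c k * c n`, so `k ↦ c k • α` is `n`-periodic. Hence
`π (k • m) := c k • α` is well defined, and `c (k + 1) = f (k • m) * c k` is exactly the
required identity. The shift `m = 0` is handled pointwise.
-/

section OrbitProd

variable {A : Type*} [AddGroup A] {G : Type*} [Group G] {Ω : Type*} [MulAction G Ω]

def orbitProd (f : A → G) (m : A) : ℕ → G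
  | 0 => 1
  | k + 1 => f (k • m) * orbitProd f m k

variable {f : A → G} {m : A}

theorem orbitProd_add_addOrderOf (k : ℕ) :
    orbitProd f m (k + addOrderOf m) = orbitProd f m k * orbitProd f m (addOrderOf m) := by
  induction k with
  | zero => simp [orbitProd]
  | succ k ih =>
    rw [Nat.add_right_comm, orbitProd, ih, add_nsmul, addOrderOf_nsmul_eq_zero, add_zero,
      orbitProd, mul_assoc]

theorem orbitProd_mem {S : Subgroup G} (hf : ∀ a, f a ∈ S) (k : ℕ) : orbitProd f m k ∈ S := by
  induction k with
  | zero => exact S.one_mem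
  | succ k ih => exact S.mul_mem (hf _) ih

theorem periodic_orbitProd_smul {α : Ω} (hα : orbitProd f m (addOrderOf m) • α = α) :
    Function.Periodic (fun k => orbitProd f m k • α) (addOrderOf m) := fun k => by
  simp only [orbitProd_add_addOrderOf, mul_smul, hα]

theorem orbitProd_smul_eq_of_nsmul_eq {α : Ω} (hα : orbitProd f m (addOrderOf m) • α = α)
    {j k : ℕ} (h : j • m = k • m) : orbitProd f m j • α = orbitProd f m k • α := by
  have hp := periodic_orbitProd_smul hα
  rw [← hp.map_mod_nat j, ← hp.map_mod_nat k, nsmul_eq_nsmul_iff_modEq.mp h]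

theorem exists_shift_fixed_of_forall_nsmul (hm : ∀ a : A, ∃ k : ℕ, k • m = a) {α : Ω}
    (hα : orbitProd f m (addOrderOf m) • α = α) :
    ∃ π : A → Ω, ∀ i, f (i - m) • π (i - m) = π i := by
  choose index hindex using hm
  have hπ (k : ℕ) : orbitProd f m (index (k • m)) • α = orbitProd f m k • α :=
    orbitProd_smul_eq_of_nsmul_eq hα (hindex _)
  refine ⟨fun i => orbitProd f m (index i) • α, fun i => ?_⟩
  obtain ⟨j, hj⟩ : ∃ j : ℕ, j • m = i - m := ⟨_, hindex _⟩
  have hi : i = (j + 1) • m := by rw [succ_nsmul, hj, sub_add_cancel]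
  simp only [← hj, hπ, ← mul_smul]
  rw [hi, hπ, orbitProd]

end OrbitProd

/-- Let `ℓ` be a prime, let `G` act on `Ω`, and let `S ≤ G` be a
subgroup each of whose elements fixes some point of `Ω`.  Then for every
`f : ZMod ℓ → S` and every `m : ZMod ℓ` there is `π : ZMod ℓ → Ω` with
`f (i - m) • π (i - m) = π i` for all `i`; i.e. every element `(f; m)` of the
wreath product `S ≀ ZMod ℓ` fixes a point of `Ω ^ (ZMod ℓ)`, so `S ≀ ZMod ℓ` is an
intersecting subgroup of `G ≀ ZMod ℓ`. -/
theorem stmt6 (ℓ : ℕ) (hℓ : ℓ.Prime) {G : Type*} [Group G] {Ω : Type*}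
    [MulAction G Ω] (S : Subgroup G) (hS : ∀ s ∈ S, ∃ α : Ω, s • α = α)
    (f : ZMod ℓ → S) (m : ZMod ℓ) :
    ∃ π : ZMod ℓ → Ω, ∀ i : ZMod ℓ, (f (i - m) : G) • π (i - m) = π i := by
  have : Fact ℓ.Prime := ⟨hℓ⟩
  rcases eq_or_ne m 0 with rfl | hm
  · choose π hπ using fun i => hS (f i) (f i).2
    exact ⟨π, fun i => by simpa using hπ i⟩
  have hgen (a : ZMod ℓ) : ∃ k : ℕ, k • m = a :=
    ⟨(a * m⁻¹).val, by rw [nsmul_eq_mul, ZMod.natCast_zmod_val, inv_mul_cancel_right₀ hm]⟩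
  obtain ⟨α, hα⟩ := hS (orbitProd (fun a => (f a : G)) m (addOrderOf m))
    (orbitProd_mem (fun a => (f a).2) _)
  exact exists_shift_fixed_of_forall_nsmul hgen hα
end

section
/- Let F be a finite field of characteristic 2 with |F| = q ≥ 4. For all a ∈ F and b ∈ Fˣ, the invertible matrix [[1, a], [0, b]] fixes setwise some unordered pair {P, S} of two distinct points of the projective line ℙ(F²). Consequently, the image S̄ in PGL(2, F) of the subgroup { [[1, a], [0, b]] : a ∈ F, b ∈ Fˣ } is an intersecting subgroup for the action of PGL(2, F) on the set Δ of 2-element subsets of ℙ(F²); moreover |S̄| = q(q−1), while the setwise stabilizer in PGL(2, F) of the pair {[1:0], [0:1]} has order 2(q−1), so |S̄| = (q/2)·|stabilizer|. -/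
open scoped LinearAlgebra.Projectivization Pointwise
open Matrix

/-- The permutation of projective space induced by a linear automorphism. -/
noncomputable def projPerm {F V : Type*} [Field F] [AddCommGroup V] [Module F V]
    (e : V ≃ₗ[F] V) : Equiv.Perm (ℙ F V) where
  toFun := Projectivization.map (e : V →ₗ[F] V) e.injective
  invFun := Projectivization.map (e.symm : V →ₗ[F] V) e.symm.injective
  left_inv x := by
    induction x using Projectivization.ind with
    | h v hv =>
      rw [Projectivization.map_mk, Projectivization.map_mk]
      exact (Projectivization.mk_eq_mk_iff F _ _ _ hv).mpr ⟨1, by simp⟩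
  right_inv x := by
    induction x using Projectivization.ind with
    | h v hv =>
      rw [Projectivization.map_mk, Projectivization.map_mk]
      exact (Projectivization.mk_eq_mk_iff F _ _ _ hv).mpr ⟨1, by simp⟩

lemma projPerm_one {F V : Type*} [Field F] [AddCommGroup V] [Module F V] :
    projPerm (1 : V ≃ₗ[F] V) = 1 := by
  ext x
  induction x using Projectivization.ind with
  | h v hv => rfl

lemma projPerm_mul {F V : Type*} [Field F] [AddCommGroup V] [Module F V]
    (e₁ e₂ : V ≃ₗ[F] V) : projPerm (e₁ * e₂) = projPerm e₁ * projPerm e₂ := by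
  ext x
  induction x using Projectivization.ind with
  | h v hv => rfl

/-- The natural homomorphism `GL(2, F) →* Sym(ℙ¹(F))`; its range is the
projective general linear group `PGL(2, F)`, acting on the projective line. -/
noncomputable def glToPerm {F : Type*} [Field F] :
    GL (Fin 2) F →* Equiv.Perm (ℙ F (Fin 2 → F)) where
  toFun g :=
    projPerm ((LinearMap.GeneralLinearGroup.generalLinearEquiv F (Fin 2 → F))
      (Matrix.GeneralLinearGroup.toLin g))
  map_one' := by simp only [_root_.map_one, projPerm_one]
  map_mul' g h := by simp only [_root_.map_mul, projPerm_mul]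

/-!
In the affine coordinate `t = x / y` on `ℙ¹(F)`, the matrix `[[1, a], [0, b]]` acts as
`t ↦ (t + a) / b`. It fixes `∞`, and also `a / (b - 1)` when `b ≠ 1`; when `b = 1` it is the
translation by `a`, which in characteristic `2` swaps `0` and `a`. As `S₀` is a group, applying
this to `y⁻¹ x` shows that `S̄` is intersecting on pairs. The map `S₀ → S̄` is injective, since
`t ↦ (t + a) / b` is determined by the images of `0` and `1`, and the stabilizer of `{∞, 0}` in
`PGL(2, F)` consists of the classes of `[[u, 0], [0, 1]]` and `[[0, 1], [u, 0]]`, `u ∈ Fˣ`.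
-/

lemma vec_ne_zero_of_fst {α : Type*} [Zero α] {x y : α} (hx : x ≠ 0) : ![x, y] ≠ 0 :=
  fun h => hx (congrFun h 0)

lemma vec_ne_zero_of_snd {α : Type*} [Zero α] {x y : α} (hy : y ≠ 0) : ![x, y] ≠ 0 :=
  fun h => hy (congrFun h 1)

abbrev ptInf (F : Type*) [Field F] : ℙ F (Fin 2 → F) :=
  .mk F ![1, 0] (vec_ne_zero_of_fst one_ne_zero)

abbrev ptZero (F : Type*) [Field F] : ℙ F (Fin 2 → F) :=
  .mk F ![0, 1] (vec_ne_zero_of_snd one_ne_zero)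

section

variable {F : Type*} [Field F]

lemma Matrix.GeneralLinearGroup.mulVec_ne_zero {n : Type*} [Fintype n] [DecidableEq n]
    (g : GL n F) {v : n → F} (hv : v ≠ 0) : (g : Matrix n n F) *ᵥ v ≠ 0 := by
  simpa using (Matrix.mulVec_injective_of_isUnit g.isUnit).ne hv

lemma glToPerm_mk (g : GL (Fin 2) F) {v : Fin 2 → F} (hv : v ≠ 0) :
    glToPerm g (Projectivization.mk F v hv) =
      Projectivization.mk F (g *ᵥ v) (g.mulVec_ne_zero hv) :=
  rfl

lemma Projectivization.mk_eq_mk_iff_mul_eq_mul {v w : Fin 2 → F} (hv : v ≠ 0) (hw : w ≠ 0) :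
    Projectivization.mk F v hv = Projectivization.mk F w hw ↔ v 0 * w 1 = v 1 * w 0 := by
  rw [Projectivization.mk_eq_mk_iff']
  constructor
  · rintro ⟨c, rfl⟩
    simp only [Pi.smul_apply, smul_eq_mul]
    ring
  · intro h
    by_cases hw0 : w 0 = 0
    · have hw1 : w 1 ≠ 0 := fun hw1 => hw (funext fun i => by fin_cases i <;> assumption)
      simp only [hw0, mul_zero, mul_eq_zero] at h
      refine ⟨v 1 / w 1, funext fun i => ?_⟩
      fin_cases i <;> simp [hw0, h.resolve_right hw1, hw1]
    · refine ⟨v 0 / w 0, funext fun i => ?_⟩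
      fin_cases i
      · simp [hw0]
      · simp only [Fin.mk_one, Pi.smul_apply, smul_eq_mul]
        field_simp
        linear_combination h

lemma glToPerm_mk_eq_mk_iff {g : GL (Fin 2) F} {a b c d : F}
    (hg : (g : Matrix (Fin 2) (Fin 2) F) = !![a, b; c, d]) {x y x' y' : F}
    (hv : ![x, y] ≠ 0) (hw : ![x', y'] ≠ 0) :
    glToPerm g (Projectivization.mk F ![x, y] hv) = Projectivization.mk F ![x', y'] hw ↔
      (a * x + b * y) * y' = (c * x + d * y) * x' := by
  simp only [glToPerm_mk, Projectivization.mk_eq_mk_iff_mul_eq_mul, hg, Matrix.mulVec_fin_two]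
  simp [mul_comm]

lemma Equiv.Perm.smul_pair {α : Type*} (σ : Equiv.Perm α) (x y : α) :
    σ • ({x, y} : Set α) = {σ x, σ y} := by
  simp [Set.smul_set_insert, Set.smul_set_singleton, Equiv.Perm.smul_def]

lemma exists_ne_glToPerm_smul_pair_eq [CharP F 2] {g : GL (Fin 2) F} {a : F} {b : Fˣ}
    (hg : (g : Matrix (Fin 2) (Fin 2) F) = !![1, a; 0, (b : F)]) :
    ∃ P Q : ℙ F (Fin 2 → F), P ≠ Q ∧
      glToPerm g • ({P, Q} : Set (ℙ F (Fin 2 → F))) = {P, Q} := by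
  have h₁₀ : ![(1 : F), 0] ≠ 0 := vec_ne_zero_of_fst one_ne_zero
  have h₀₁ : ![(0 : F), 1] ≠ 0 := vec_ne_zero_of_snd one_ne_zero
  rcases eq_or_ne a 0 with rfl | ha
  · refine ⟨ptInf F, ptZero F, ?_, ?_⟩
    · simp [Projectivization.mk_eq_mk_iff_mul_eq_mul]
    · rw [Equiv.Perm.smul_pair, (glToPerm_mk_eq_mk_iff hg h₁₀ h₁₀).2 (by ring),
        (glToPerm_mk_eq_mk_iff hg h₀₁ h₀₁).2 (by ring)]
  rcases eq_or_ne b 1 with rfl | hb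
  · rw [Units.val_one] at hg
    have hₐ : ![a, 1] ≠ 0 := vec_ne_zero_of_snd one_ne_zero
    refine ⟨ptZero F, .mk F _ hₐ, ?_, ?_⟩
    · simpa [Projectivization.mk_eq_mk_iff_mul_eq_mul] using ha.symm
    · rw [Equiv.Perm.smul_pair, (glToPerm_mk_eq_mk_iff hg h₀₁ hₐ).2 (by ring),
        (glToPerm_mk_eq_mk_iff hg hₐ h₀₁).2 (by linear_combination CharTwo.add_self_eq_zero a),
        Set.pair_comm]
  · have hb₁ : ![a, (b : F) - 1] ≠ 0 :=
      vec_ne_zero_of_snd (sub_ne_zero.2 (Units.val_eq_one.not.2 hb))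
    refine ⟨ptInf F, .mk F _ hb₁, ?_, ?_⟩
    · simpa [Projectivization.mk_eq_mk_iff_mul_eq_mul, sub_eq_zero] using hb
    · rw [Equiv.Perm.smul_pair, (glToPerm_mk_eq_mk_iff hg h₁₀ h₁₀).2 (by ring),
        (glToPerm_mk_eq_mk_iff hg hb₁ hb₁).2 (by ring)]

noncomputable def upperTriangularGL (a : F) (b : Fˣ) : GL (Fin 2) F :=
  Matrix.GeneralLinearGroup.mkOfDetNeZero !![1, a; 0, (b : F)] (by simp [Matrix.det_fin_two_of])

lemma glToPerm_upperTriangularGL_injective :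
    Function.Injective fun p : F × Fˣ => glToPerm (upperTriangularGL p.1 p.2) := by
  rintro ⟨a, b⟩ ⟨a', b'⟩ h
  have h₀ := DFunLike.congr_fun h (ptZero F)
  have h₁ := DFunLike.congr_fun h (.mk F ![1, 1] (vec_ne_zero_of_snd one_ne_zero))
  simp [glToPerm_mk, Projectivization.mk_eq_mk_iff_mul_eq_mul, upperTriangularGL] at h₀ h₁
  have hb : (b : F) = b' := by linear_combination h₀ - h₁
  exact Prod.ext (mul_right_cancel₀ b'.ne_zero (by rw [h₀, hb, mul_comm])) (Units.ext hb)

lemma coe_eq_range_upperTriangularGL {S₀ : Subgroup (GL (Fin 2) F)}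
    (hS₀ : ∀ g : GL (Fin 2) F, g ∈ S₀ ↔
      ∃ (a : F) (b : Fˣ), (g : Matrix (Fin 2) (Fin 2) F) = !![1, a; 0, (b : F)]) :
    (S₀ : Set (GL (Fin 2) F)) = Set.range fun p : F × Fˣ => upperTriangularGL p.1 p.2 := by
  ext g
  simp [hS₀, Units.ext_iff, upperTriangularGL, eq_comm]

lemma card_map_glToPerm_of_upperTriangular {S₀ : Subgroup (GL (Fin 2) F)}
    (hS₀ : ∀ g : GL (Fin 2) F, g ∈ S₀ ↔
      ∃ (a : F) (b : Fˣ), (g : Matrix (Fin 2) (Fin 2) F) = !![1, a; 0, (b : F)]) :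
    Nat.card (S₀.map glToPerm) = Nat.card F * (Nat.card F - 1) := by
  have : (S₀.map glToPerm : Set (Equiv.Perm (ℙ F (Fin 2 → F)))) =
      Set.range fun p : F × Fˣ => glToPerm (upperTriangularGL p.1 p.2) := by
    rw [Subgroup.coe_map, coe_eq_range_upperTriangularGL hS₀, ← Set.range_comp]
    rfl
  rw [← SetLike.coe_sort_coe, this,
    Nat.card_range_of_injective glToPerm_upperTriangularGL_injective, Nat.card_prod,
    Nat.card_units]

lemma exists_ne_smul_pair_eq_smul_pair [CharP F 2] {S₀ : Subgroup (GL (Fin 2) F)}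
    (hS₀ : ∀ g : GL (Fin 2) F, g ∈ S₀ ↔
      ∃ (a : F) (b : Fˣ), (g : Matrix (Fin 2) (Fin 2) F) = !![1, a; 0, (b : F)])
    {x y : Equiv.Perm (ℙ F (Fin 2 → F))} (hx : x ∈ S₀.map glToPerm)
    (hy : y ∈ S₀.map glToPerm) :
    ∃ P Q : ℙ F (Fin 2 → F), P ≠ Q ∧
      x • ({P, Q} : Set (ℙ F (Fin 2 → F))) = y • ({P, Q} : Set (ℙ F (Fin 2 → F))) := by
  obtain ⟨g, hg, rfl⟩ := hx
  obtain ⟨h, hh, rfl⟩ := hy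
  obtain ⟨a, b, hab⟩ := (hS₀ _).1 (S₀.mul_mem (S₀.inv_mem hh) hg)
  obtain ⟨P, Q, hPQ, hfix⟩ := exists_ne_glToPerm_smul_pair_eq hab
  refine ⟨P, Q, hPQ, ?_⟩
  calc glToPerm g • ({P, Q} : Set (ℙ F (Fin 2 → F)))
      = glToPerm (h * (h⁻¹ * g)) • {P, Q} := by rw [mul_inv_cancel_left]
    _ = glToPerm h • {P, Q} := by rw [map_mul, mul_smul, hfix]

lemma glToPerm_eq_of_val_eq_smul {g h : GL (Fin 2) F} {c : F}
    (hgh : (g : Matrix (Fin 2) (Fin 2) F) = c • (h : Matrix (Fin 2) (Fin 2) F)) :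
    glToPerm g = glToPerm h := by
  ext P
  induction P using Projectivization.ind with
  | h v hv =>
    rw [glToPerm_mk, glToPerm_mk, Projectivization.mk_eq_mk_iff']
    exact ⟨c, by rw [hgh, Matrix.smul_mulVec]⟩

noncomputable def monomialGL (u : Fˣ) : Bool → GL (Fin 2) F
  | false => Matrix.GeneralLinearGroup.mkOfDetNeZero !![(u : F), 0; 0, 1]
      (by simp [Matrix.det_fin_two_of])
  | true => Matrix.GeneralLinearGroup.mkOfDetNeZero !![0, 1; (u : F), 0]
      (by simp [Matrix.det_fin_two_of])

lemma glToPerm_monomialGL_smul_pair (u : Fˣ) (s : Bool) :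
    glToPerm (monomialGL u s) • ({ptInf F, ptZero F} : Set (ℙ F (Fin 2 → F))) =
      {ptInf F, ptZero F} := by
  rw [Equiv.Perm.smul_pair]
  have h₁₀ : ![(1 : F), 0] ≠ 0 := vec_ne_zero_of_fst one_ne_zero
  have h₀₁ : ![(0 : F), 1] ≠ 0 := vec_ne_zero_of_snd one_ne_zero
  cases s
  · rw [(glToPerm_mk_eq_mk_iff rfl h₁₀ h₁₀).2 (by ring),
      (glToPerm_mk_eq_mk_iff rfl h₀₁ h₀₁).2 (by ring)]
  · rw [(glToPerm_mk_eq_mk_iff rfl h₁₀ h₀₁).2 (by ring),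
      (glToPerm_mk_eq_mk_iff rfl h₀₁ h₁₀).2 (by ring), Set.pair_comm]

lemma glToPerm_monomialGL_injective :
    Function.Injective fun p : Fˣ × Bool => glToPerm (monomialGL p.1 p.2) := by
  rintro ⟨u, s⟩ ⟨v, t⟩ h
  have h₁₀ := DFunLike.congr_fun h (ptInf F)
  have h₁₁ := DFunLike.congr_fun h (.mk F ![1, 1] (vec_ne_zero_of_snd one_ne_zero))
  simp only [glToPerm_mk, Projectivization.mk_eq_mk_iff_mul_eq_mul] at h₁₀ h₁₁
  cases s <;> cases t <;> simp [monomialGL, Units.ext_iff] at h₁₀ h₁₁ ⊢ <;> simp [h₁₁]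

lemma exists_glToPerm_monomialGL_eq_of_smul_pair {g : GL (Fin 2) F}
    (hg : glToPerm g • ({ptInf F, ptZero F} : Set (ℙ F (Fin 2 → F))) = {ptInf F, ptZero F}) :
    ∃ (u : Fˣ) (s : Bool), glToPerm (monomialGL u s) = glToPerm g := by
  set M : Matrix (Fin 2) (Fin 2) F := (g : Matrix (Fin 2) (Fin 2) F)
  have hdet : M 0 0 * M 1 1 - M 0 1 * M 1 0 ≠ 0 := by
    simpa [Matrix.det_fin_two] using g.det_ne_zero
  rw [Equiv.Perm.smul_pair, Set.pair_eq_pair_iff] at hg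
  simp only [glToPerm_mk_eq_mk_iff (Matrix.eta_fin_two M)] at hg
  rcases hg with ⟨h₁₀, h₀₁⟩ | ⟨h₁₀, h₀₁⟩
  · simp only [mul_one, mul_zero, add_zero, zero_add] at h₁₀ h₀₁
    rw [← h₁₀, h₀₁, mul_zero, sub_zero] at hdet
    obtain ⟨ha, hd⟩ := mul_ne_zero_iff.1 hdet
    refine ⟨.mk0 (M 0 0 / M 1 1) (div_ne_zero ha hd), false,
      glToPerm_eq_of_val_eq_smul (c := (M 1 1)⁻¹) ?_⟩
    ext i j
    fin_cases i <;> fin_cases j <;> simp [monomialGL, M, ← h₁₀, h₀₁, div_eq_inv_mul, hd]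
  · simp only [mul_one, mul_zero, add_zero, zero_add] at h₁₀ h₀₁
    rw [h₁₀, ← h₀₁, zero_mul, zero_sub, neg_ne_zero] at hdet
    obtain ⟨hb, hc⟩ := mul_ne_zero_iff.1 hdet
    refine ⟨.mk0 (M 1 0 / M 0 1) (div_ne_zero hc hb), true,
      glToPerm_eq_of_val_eq_smul (c := (M 0 1)⁻¹) ?_⟩
    ext i j
    fin_cases i <;> fin_cases j <;> simp [monomialGL, M, h₁₀, ← h₀₁, div_eq_inv_mul, hb]

lemma card_stabilizer_pair_ptInf_ptZero :
    Nat.card (MulAction.stabilizer (glToPerm (F := F)).range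
      ({ptInf F, ptZero F} : Set (ℙ F (Fin 2 → F)))) = 2 * (Nat.card F - 1) := by
  let f : Fˣ × Bool → MulAction.stabilizer (glToPerm (F := F)).range
      ({ptInf F, ptZero F} : Set (ℙ F (Fin 2 → F))) := fun p =>
    ⟨⟨glToPerm (monomialGL p.1 p.2), ⟨_, rfl⟩⟩, glToPerm_monomialGL_smul_pair p.1 p.2⟩
  have hf : Function.Bijective f := by
    refine ⟨fun p p' h => glToPerm_monomialGL_injective congr(($h).1.1), ?_⟩
    rintro ⟨⟨_, g, rfl⟩, hg⟩
    obtain ⟨u, s, h⟩ := exists_glToPerm_monomialGL_eq_of_smul_pair hg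
    exact ⟨(u, s), Subtype.ext (Subtype.ext h)⟩
  rw [← Nat.card_eq_of_bijective f hf, Nat.card_prod, Nat.card_units,
    Nat.card_eq_fintype_card (α := Bool), Fintype.card_bool, mul_comm]

end

theorem stmt8_general (F : Type*) [Field F] [Fintype F] (hchar : ringChar F = 2)
    (q : ℕ) (hq : Fintype.card F = q)
    (S₀ : Subgroup (GL (Fin 2) F))
    (hS₀ : ∀ g : GL (Fin 2) F, g ∈ S₀ ↔
      ∃ (a : F) (b : Fˣ), (g : Matrix (Fin 2) (Fin 2) F) = !![1, a; 0, (b : F)]) :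
    (∀ (g : GL (Fin 2) F) (a : F) (b : Fˣ),
        (g : Matrix (Fin 2) (Fin 2) F) = !![1, a; 0, (b : F)] →
        ∃ P Q : ℙ F (Fin 2 → F), P ≠ Q ∧
          glToPerm g • ({P, Q} : Set (ℙ F (Fin 2 → F))) = {P, Q}) ∧
    Subgroup.map glToPerm S₀ ≤ (glToPerm (F := F)).range ∧
    (∀ x ∈ Subgroup.map glToPerm S₀, ∀ y ∈ Subgroup.map glToPerm S₀,
        ∃ P Q : ℙ F (Fin 2 → F), P ≠ Q ∧
          x • ({P, Q} : Set (ℙ F (Fin 2 → F))) =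
            y • ({P, Q} : Set (ℙ F (Fin 2 → F)))) ∧
    Nat.card (Subgroup.map glToPerm S₀) = q * (q - 1) ∧
    Nat.card (MulAction.stabilizer (glToPerm (F := F)).range
        ({Projectivization.mk F ![1, 0] (fun h => one_ne_zero (congrFun h 0)),
          Projectivization.mk F ![0, 1] (fun h => one_ne_zero (congrFun h 1))} :
            Set (ℙ F (Fin 2 → F)))) = 2 * (q - 1) ∧
    2 * Nat.card (Subgroup.map glToPerm S₀) =
      q * Nat.card (MulAction.stabilizer (glToPerm (F := F)).range
        ({Projectivization.mk F ![1, 0] (fun h => one_ne_zero (congrFun h 0)),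
          Projectivization.mk F ![0, 1] (fun h => one_ne_zero (congrFun h 1))} :
            Set (ℙ F (Fin 2 → F)))) := by
  have : CharP F 2 := ringChar.eq_iff.mp hchar
  have hF : Nat.card F = q := Nat.card_eq_fintype_card.trans hq
  have hS : Nat.card (S₀.map glToPerm) = q * (q - 1) :=
    hF ▸ card_map_glToPerm_of_upperTriangular hS₀
  have hT : Nat.card (MulAction.stabilizer (glToPerm (F := F)).range
      ({ptInf F, ptZero F} : Set (ℙ F (Fin 2 → F)))) = 2 * (q - 1) :=
    hF ▸ card_stabilizer_pair_ptInf_ptZero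
  refine ⟨fun g a b hg => exists_ne_glToPerm_smul_pair_eq hg, Subgroup.map_le_range _ _,
    fun x hx y hy => exists_ne_smul_pair_eq_smul_pair hS₀ hx hy, hS, hT, ?_⟩
  rw [hS, hT]
  ring

/-- Let `F` be a finite field of characteristic `2` with
`|F| = q ≥ 4`.  Every matrix `[[1, a], [0, b]]` (`a ∈ F`, `b ∈ Fˣ`) fixes
setwise some unordered pair of distinct points of the projective line
`ℙ(F²)`.  Consequently, the image `S̄` in `PGL(2, F)` of the subgroup
`{ [[1, a], [0, b]] : a ∈ F, b ∈ Fˣ }` is an intersecting subgroup for the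
action of `PGL(2, F)` on `2`-element subsets of `ℙ(F²)`; moreover
`|S̄| = q(q - 1)` while the setwise stabilizer of `{[1:0], [0:1]}` in
`PGL(2, F)` has order `2(q - 1)`, so `|S̄| = (q/2)·|stabilizer|`. -/
theorem stmt8 (F : Type*) [Field F] [Fintype F] (hchar : ringChar F = 2)
    (q : ℕ) (hq : Fintype.card F = q) (hq4 : 4 ≤ q)
    (S₀ : Subgroup (GL (Fin 2) F))
    (hS₀ : ∀ g : GL (Fin 2) F, g ∈ S₀ ↔
      ∃ (a : F) (b : Fˣ), (g : Matrix (Fin 2) (Fin 2) F) = !![1, a; 0, (b : F)]) :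
    (∀ (g : GL (Fin 2) F) (a : F) (b : Fˣ),
        (g : Matrix (Fin 2) (Fin 2) F) = !![1, a; 0, (b : F)] →
        ∃ P Q : ℙ F (Fin 2 → F), P ≠ Q ∧
          glToPerm g • ({P, Q} : Set (ℙ F (Fin 2 → F))) = {P, Q}) ∧
    Subgroup.map glToPerm S₀ ≤ (glToPerm (F := F)).range ∧
    (∀ x ∈ Subgroup.map glToPerm S₀, ∀ y ∈ Subgroup.map glToPerm S₀,
        ∃ P Q : ℙ F (Fin 2 → F), P ≠ Q ∧
          x • ({P, Q} : Set (ℙ F (Fin 2 → F))) =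
            y • ({P, Q} : Set (ℙ F (Fin 2 → F)))) ∧
    Nat.card (Subgroup.map glToPerm S₀) = q * (q - 1) ∧
    Nat.card (MulAction.stabilizer (glToPerm (F := F)).range
        ({Projectivization.mk F ![1, 0] (fun h => one_ne_zero (congrFun h 0)),
          Projectivization.mk F ![0, 1] (fun h => one_ne_zero (congrFun h 1))} :
            Set (ℙ F (Fin 2 → F)))) = 2 * (q - 1) ∧
    2 * Nat.card (Subgroup.map glToPerm S₀) =
      q * Nat.card (MulAction.stabilizer (glToPerm (F := F)).range
        ({Projectivization.mk F ![1, 0] (fun h => one_ne_zero (congrFun h 0)),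
          Projectivization.mk F ![0, 1] (fun h => one_ne_zero (congrFun h 1))} :
            Set (ℙ F (Fin 2 → F)))) :=
  stmt8_general F hchar q hq S₀ hS₀
end

section
/- Let p ≥ 5 be a prime with p ≡ 3 (mod 4), and let G = PSL(2, p) act faithfully, transitively and primitively on a finite set Ω such that the point stabilizer G_ω is isomorphic as a group to the dihedral group of order p + 1. Then G has the EKR property: every intersecting set S ⊆ G satisfies |S| ≤ |G_ω|. -/
/-!
Let `N` be the image in `G` of the stabilizer in `PSL(2, p)` of a point of the projective line
(the Borel subgroup modulo `±1`). It has index `p + 1` and order `p (p - 1) / 2`, which is coprime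
to `p + 1 = |G_ω|` when `p ≡ 3 (mod 4)`; hence `N` meets every point stabilizer trivially.
If `x, y` lie in an intersecting set then `x⁻¹ y` fixes a point, so `x` and `y` cannot lie in the
same left coset of `N`. Thus `|S| ≤ [G : N] = p + 1 = |G_ω|`.
-/

/-- `PSL(2, p)`: the quotient of `SL(2, ZMod p)` by its center. -/
abbrev PSL2 (p : ℕ) :=
  Matrix.SpecialLinearGroup (Fin 2) (ZMod p) ⧸
    Subgroup.center (Matrix.SpecialLinearGroup (Fin 2) (ZMod p))

open MulAction
open scoped LinearAlgebra.Projectivization MatrixGroups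

namespace MulAction

variable {G Ω : Type*} [Group G] [MulAction G Ω]

theorem ncard_le_index_of_disjoint_stabilizer {S : Set G}
    (hS : ∀ x ∈ S, ∀ y ∈ S, ∃ α : Ω, x • α = y • α)
    {N : Subgroup G} [N.FiniteIndex]
    (hN : ∀ α : Ω, Disjoint N (stabilizer G α)) : S.ncard ≤ N.index := by
  have hinj : S.InjOn (QuotientGroup.mk : G → G ⧸ N) := by
    intro x hx y hy hxy
    obtain ⟨α, hα⟩ := hS x hx y hy
    have hfix : x⁻¹ * y ∈ stabilizer G α := by
      rw [mem_stabilizer_iff, mul_smul, ← hα, inv_smul_smul]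
    exact inv_mul_eq_one.mp ((hN α).le_bot ⟨QuotientGroup.eq.mp hxy, hfix⟩)
  calc S.ncard ≤ (Set.univ : Set (G ⧸ N)).ncard :=
        Set.ncard_le_ncard_of_injOn _ (fun _ _ ↦ Set.mem_univ _) hinj
    _ = N.index := by rw [Set.ncard_univ, Subgroup.index]

theorem card_stabilizer_eq [IsPretransitive G Ω] (α β : Ω) :
    Nat.card (stabilizer G α) = Nat.card (stabilizer G β) := by
  obtain ⟨g, rfl⟩ := exists_smul_eq G β α
  rw [stabilizer_smul_eq_stabilizer_map_conj,
    Subgroup.card_map_of_injective (MulAut.conj g).injective]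

end MulAction

theorem Subgroup.card_comap_of_surjective {G H : Type*} [Group G] [Group H] {f : G →* H}
    (hf : Function.Surjective f) (K : Subgroup H) :
    Nat.card (K.comap f) = Nat.card K * Nat.card f.ker := by
  have hker : f.ker ≤ K.comap f := fun x hx ↦ by simp [(MonoidHom.mem_ker).mp hx]
  rw [← Subgroup.card_mul_index (f.ker.subgroupOf (K.comap f)),
    Nat.card_congr (Subgroup.subgroupOfEquivOfLe hker).toEquiv, ← Subgroup.relIndex,
    Subgroup.relIndex_ker, Subgroup.map_comap_eq_self_of_surjective hf, mul_comm]

theorem Nat.coprime_mul_sub_one_div_two_add_one {p : ℕ} (hp : p % 4 = 3) :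
    Nat.Coprime (p * (p - 1) / 2) (p + 1) := by
  obtain ⟨m, rfl⟩ : ∃ m, p = 4 * m + 3 := ⟨p / 4, by omega⟩
  have hhalf : (4 * m + 3) * (4 * m + 3 - 1) / 2 = (4 * m + 3) * (2 * m + 1) := by
    rw [show 4 * m + 3 - 1 = (2 * m + 1) * 2 by omega, ← mul_assoc, Nat.mul_div_cancel _ two_pos]
  rw [hhalf, ← Nat.isCoprime_iff_coprime]
  push_cast
  exact IsCoprime.mul_left ⟨-1, 1, by ring⟩ ⟨-(2 * m + 3), m + 1, by ring⟩

/-- The point `[1 : 0]`, which is `∞` under `OnePoint.equivProjectivization`. -/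
def Projectivization.infty (K : Type*) [Field K] : ℙ K (Fin 2 → K) :=
  Projectivization.mk K ![1, 0] (by simp)

namespace Matrix.SpecialLinearGroup

variable {K : Type*} [Field K]

theorem mem_stabilizer_infty_iff (A : SL(2, K)) :
    A ∈ stabilizer SL(2, K) (Projectivization.infty K) ↔ A 1 0 = 0 := by
  rw [Projectivization.infty, mem_stabilizer_iff, Projectivization.smul_mk,
    Projectivization.mk_eq_mk_iff']
  constructor
  · rintro ⟨a, ha⟩
    simpa [SpecialLinearGroup.smul_def] using (congrFun ha 1).symm
  · intro h
    refine ⟨A 0 0, funext fun i ↦ ?_⟩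
    fin_cases i <;> simp [SpecialLinearGroup.smul_def, h]

theorem mul_eq_one_of_apply_one_zero_eq_zero {A : SL(2, K)} (h : A 1 0 = 0) :
    A 0 0 * A 1 1 = 1 := by
  have hdet := A.det_coe
  rwa [Matrix.det_fin_two, h, mul_zero, sub_zero] at hdet

noncomputable def stabilizerInftyEquiv :
    stabilizer SL(2, K) (Projectivization.infty K) ≃ Kˣ × K where
  toFun A :=
    have h := (mem_stabilizer_infty_iff A.1).mp A.2
    (⟨A.1 0 0, A.1 1 1, mul_eq_one_of_apply_one_zero_eq_zero h,
      by rw [mul_comm]; exact mul_eq_one_of_apply_one_zero_eq_zero h⟩, A.1 0 1)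
  invFun x := ⟨⟨!![(x.1 : K), x.2; 0, (x.1⁻¹ : Kˣ)], by simp [Matrix.det_fin_two]⟩,
    (mem_stabilizer_infty_iff _).mpr rfl⟩
  left_inv A := by
    have h := (mem_stabilizer_infty_iff A.1).mp A.2
    ext i j
    fin_cases i <;> fin_cases j <;> simp [h]
  right_inv x := by ext <;> simp

theorem card_stabilizer_infty [Finite K] :
    Nat.card (stabilizer SL(2, K) (Projectivization.infty K)) =
      Nat.card K * (Nat.card K - 1) := by
  rw [Nat.card_congr stabilizerInftyEquiv, Nat.card_prod, Nat.card_units, mul_comm]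

theorem two_dvd_card_center (hK : ringChar K ≠ 2) :
    2 ∣ Nat.card (Subgroup.center SL(2, K)) := by
  have hmem : (-1 : SL(2, K)) ∈ Subgroup.center SL(2, K) :=
    Subgroup.mem_center_iff.mpr fun g ↦ by rw [mul_neg_one, neg_one_mul]
  have hne : (-1 : SL(2, K)) ≠ 1 := fun h ↦
    Ring.neg_one_ne_one_of_char_ne_two hK (by simpa using congrArg (fun A : SL(2, K) ↦ A 0 0) h)
  have horder : orderOf (⟨-1, hmem⟩ : Subgroup.center SL(2, K)) = 2 := by
    rw [Subgroup.orderOf_mk]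
    exact orderOf_eq_prime neg_one_sq hne
  simpa only [horder] using orderOf_dvd_natCard (⟨-1, hmem⟩ : Subgroup.center SL(2, K))

end Matrix.SpecialLinearGroup

namespace Matrix.ProjectiveSpecialLinearGroup

variable {K : Type*} [Field K]

theorem comap_mk_stabilizer {ι : Type*} [Fintype ι] [DecidableEq ι] (x : ℙ K (ι → K)) :
    (stabilizer (ProjectiveSpecialLinearGroup ι K) x).comap (QuotientGroup.mk' _) =
      stabilizer (SpecialLinearGroup ι K) x :=
  rfl

theorem index_stabilizer [Finite K] (x : ℙ K (Fin 2 → K)) :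
    (stabilizer PSL(2, K) x).index = Nat.card K + 1 := by
  rw [index_stabilizer_of_transitive, Projectivization.card_of_finrank_two]
  simp

theorem two_mul_card_stabilizer_infty_dvd [Finite K] (hK : ringChar K ≠ 2) :
    2 * Nat.card (stabilizer PSL(2, K) (Projectivization.infty K)) ∣
      Nat.card K * (Nat.card K - 1) := by
  have h := Subgroup.card_comap_of_surjective (QuotientGroup.mk'_surjective _)
    (stabilizer PSL(2, K) (Projectivization.infty K))
  rw [comap_mk_stabilizer, SpecialLinearGroup.card_stabilizer_infty,
    QuotientGroup.ker_mk'] at h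
  obtain ⟨k, hk⟩ := SpecialLinearGroup.two_dvd_card_center hK
  exact ⟨k, by rw [h, hk]; ring⟩

end Matrix.ProjectiveSpecialLinearGroup

theorem stmt12_general (p : ℕ) (hp : p.Prime) (hp4 : p % 4 = 3)
    (G : Type*) [Group G] (e : G ≃* PSL2 p)
    (Ω : Type*) [MulAction G Ω]
    [MulAction.IsPretransitive G Ω]
    (ω : Ω)
    (hstab : Nonempty (MulAction.stabilizer G ω ≃* DihedralGroup ((p + 1) / 2))) :
    ∀ S : Set G, (∀ x ∈ S, ∀ y ∈ S, ∃ α : Ω, x • α = y • α) →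
      S.ncard ≤ Nat.card (MulAction.stabilizer G ω) := by
  intro S hS
  have := Fact.mk hp
  have hcard : Nat.card (stabilizer G ω) = p + 1 := by
    rw [Nat.card_congr hstab.some.toEquiv, DihedralGroup.nat_card]
    omega
  set N : Subgroup G :=
    (stabilizer PSL(2, ZMod p) (Projectivization.infty (ZMod p))).map (e.symm : PSL2 p →* G)
    with hN
  have hindex : N.index = p + 1 := by
    rw [hN, Subgroup.index_map_equiv, Matrix.ProjectiveSpecialLinearGroup.index_stabilizer,
      Nat.card_zmod]
  have hdvd : Nat.card N ∣ p * (p - 1) / 2 := by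
    rw [hN, Subgroup.card_map_of_injective e.symm.injective]
    refine Nat.dvd_div_of_mul_dvd ?_
    have := Matrix.ProjectiveSpecialLinearGroup.two_mul_card_stabilizer_infty_dvd
      (K := ZMod p) (by rw [ZMod.ringChar_zmod_n]; omega)
    rwa [Nat.card_zmod] at this
  have hdisj (α : Ω) : Disjoint N (stabilizer G α) := by
    refine Subgroup.disjoint_of_coprime_natCard ?_
    rw [card_stabilizer_eq α ω, hcard]
    exact (Nat.coprime_mul_sub_one_div_two_add_one hp4).coprime_dvd_left hdvd
  have : N.FiniteIndex := ⟨by omega⟩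
  rw [hcard, ← hindex]
  exact ncard_le_index_of_disjoint_stabilizer hS hdisj

/-- Let `p ≥ 5` be a prime with `p ≡ 3 (mod 4)`, and let
`G = PSL(2, p)` act faithfully, transitively and primitively on a finite set `Ω`
whose point stabilizer `G_ω` is isomorphic to the dihedral group of order `p + 1`
(i.e. `DihedralGroup ((p+1)/2)`).  Then `G` has the EKR property: every
intersecting set `S ⊆ G` satisfies `|S| ≤ |G_ω|`. -/
theorem stmt12 (p : ℕ) (hp : p.Prime) (hp5 : 5 ≤ p) (hp4 : p % 4 = 3)
    (G : Type*) [Group G] (e : G ≃* PSL2 p)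
    (Ω : Type*) [Fintype Ω] [MulAction G Ω] [FaithfulSMul G Ω]
    [MulAction.IsPretransitive G Ω]
    (hprim : ∀ α : Ω, IsCoatom (MulAction.stabilizer G α)) (ω : Ω)
    (hstab : Nonempty (MulAction.stabilizer G ω ≃* DihedralGroup ((p + 1) / 2))) :
    ∀ S : Set G, (∀ x ∈ S, ∀ y ∈ S, ∃ α : Ω, x • α = y • α) →
      S.ncard ≤ Nat.card (MulAction.stabilizer G ω) :=
  stmt12_general p hp hp4 G e Ω ω hstab
end

section
/- Let p > 3 be a prime with p ≡ ±1 (mod 4), and let S ≤ SL(2, ZMod p) be a subgroup isomorphic to SL(2, ZMod 3). Then S acts semi-regularly (freely) on the nonzero vectors of (ZMod p)²: for every g ∈ S with g ≠ 1 and every nonzero v ∈ (ZMod p)², g·v ≠ v. -/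
/-!
An element of `SL(2, K)` fixing a nonzero vector has eigenvalue `1`, hence, having determinant
`1`, is unipotent: `g = 1 + N` with `N ^ 2 = 0`. Then `g ^ n = 1 + n • N`, so `g ^ n = 1` with `n`
invertible in `K` forces `g = 1`. For a subgroup of `SL(2, 𝔽_p)` isomorphic to `SL(2, 𝔽₃)` take
`n = 24`, which is prime to `p > 3`.
-/

open Matrix
open scoped MatrixGroups

theorem one_add_pow_of_sq_eq_zero {A : Type*} [Ring A] {N : A} (hN : N ^ 2 = 0) (n : ℕ) :
    (1 + N) ^ n = 1 + n • N := by
  induction n with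
  | zero => simp
  | succ k ih =>
    rw [pow_succ, ih, add_mul, one_mul, mul_add, mul_one, smul_mul_assoc, ← sq, hN, smul_zero,
      add_zero, succ_nsmul]
    abel

theorem eq_one_of_pow_eq_one_of_sq_sub_one_eq_zero {K A : Type*} [Field K] [Ring A]
    [Module K A] {x : A} {n : ℕ} (hn : (n : K) ≠ 0) (hxn : x ^ n = 1) (hx : (x - 1) ^ 2 = 0) :
    x = 1 := by
  have h := one_add_pow_of_sq_eq_zero hx n
  rw [add_sub_cancel, hxn, left_eq_add, ← Nat.cast_smul_eq_nsmul K, smul_eq_zero] at h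
  exact sub_eq_zero.1 (h.resolve_left hn)

theorem Matrix.sq_sub_one_eq_zero_of_det_eq_one_of_det_sub_one_eq_zero {R : Type*} [CommRing R]
    {M : Matrix (Fin 2) (Fin 2) R} (hdet : M.det = 1) (hfix : (M - 1).det = 0) :
    (M - 1) ^ 2 = 0 := by
  rw [det_fin_two] at hdet hfix
  simp only [sub_apply, one_apply_eq, one_apply_ne zero_ne_one, one_apply_ne one_ne_zero,
    sub_zero] at hfix
  have htrace : M 0 0 + M 1 1 = 2 := by linear_combination hdet - hfix
  -- Cayley–Hamilton with trace `2` and determinant `1`, entry by entry.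
  ext i j
  fin_cases i <;> fin_cases j <;> simp [sq, mul_apply, Fin.sum_univ_two, one_apply]
  · linear_combination M 0 0 * htrace - hdet
  · linear_combination M 0 1 * htrace
  · linear_combination M 1 0 * htrace
  · linear_combination M 1 1 * htrace - hdet

namespace Matrix.SpecialLinearGroup

variable {K : Type*} [Field K]

theorem eq_one_of_mulVec_eq_self {g : SL(2, K)} {n : ℕ} (hn : (n : K) ≠ 0) (hgn : g ^ n = 1)
    {v : Fin 2 → K} (hv : v ≠ 0) (hgv : (g : Matrix (Fin 2) (Fin 2) K) *ᵥ v = v) : g = 1 := by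
  have hfix : ((g : Matrix (Fin 2) (Fin 2) K) - 1).det = 0 :=
    exists_mulVec_eq_zero_iff.1 ⟨v, hv, by rw [sub_mulVec, one_mulVec, hgv, sub_self]⟩
  have hunip := sq_sub_one_eq_zero_of_det_eq_one_of_det_sub_one_eq_zero g.det_coe hfix
  have hgn' : (g : Matrix (Fin 2) (Fin 2) K) ^ n = 1 := by rw [← coe_pow, hgn, coe_one]
  exact Subtype.ext (eq_one_of_pow_eq_one_of_sq_sub_one_eq_zero hn hgn' hunip)

theorem mulVec_ne_self_of_mem {S : Subgroup SL(2, K)} (hS : (Nat.card S : K) ≠ 0) :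
    ∀ g ∈ S, g ≠ 1 → ∀ v : Fin 2 → K, v ≠ 0 → (g : Matrix (Fin 2) (Fin 2) K) *ᵥ v ≠ v := by
  intro g hg hg1 v hv hgv
  have hgn : g ^ Nat.card S = 1 := congrArg Subtype.val (pow_card_eq_one' (x := (⟨g, hg⟩ : S)))
  exact hg1 (eq_one_of_mulVec_eq_self hS hgn hv hgv)

end Matrix.SpecialLinearGroup

theorem stmt15_general (p : ℕ) (hp : p.Prime) (hp3 : 3 < p)
    (S : Subgroup (Matrix.SpecialLinearGroup (Fin 2) (ZMod p)))
    (hS : Nonempty (S ≃* Matrix.SpecialLinearGroup (Fin 2) (ZMod 3))) :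
    ∀ g ∈ S, g ≠ 1 → ∀ v : Fin 2 → ZMod p, v ≠ 0 →
      ((g : Matrix.SpecialLinearGroup (Fin 2) (ZMod p)) :
          Matrix (Fin 2) (Fin 2) (ZMod p)).mulVec v ≠ v := by
  have : Fact p.Prime := ⟨hp⟩
  obtain ⟨e⟩ := hS
  have hcard : Nat.card S = 24 := by
    rw [Nat.card_congr e.toEquiv, Nat.card_eq_fintype_card]
    decide
  have h24 : ((24 : ℕ) : ZMod p) ≠ 0 := by
    rw [Ne, ZMod.natCast_eq_zero_iff]
    intro hdvd
    rcases hp.dvd_mul.1 (show p ∣ 2 ^ 3 * 3 from hdvd) with h2 | h3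
    · have := Nat.le_of_dvd two_pos (hp.dvd_of_dvd_pow h2); omega
    · have := Nat.le_of_dvd three_pos h3; omega
  exact SpecialLinearGroup.mulVec_ne_self_of_mem (hcard ▸ h24)

/-- Let `p > 3` be a prime with `p ≡ ±1 (mod 4)`, and let
`S ≤ SL(2, ZMod p)` be a subgroup isomorphic to `SL(2, ZMod 3)`.  Then `S` acts
semi-regularly (freely) on the nonzero vectors of `(ZMod p)²`: no nonidentity
element of `S` fixes a nonzero vector. -/
theorem stmt15 (p : ℕ) (hp : p.Prime) (hp3 : 3 < p)
    (hpm : p % 4 = 1 ∨ p % 4 = 3)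
    (S : Subgroup (Matrix.SpecialLinearGroup (Fin 2) (ZMod p)))
    (hS : Nonempty (S ≃* Matrix.SpecialLinearGroup (Fin 2) (ZMod 3))) :
    ∀ g ∈ S, g ≠ 1 → ∀ v : Fin 2 → ZMod p, v ≠ 0 →
      ((g : Matrix.SpecialLinearGroup (Fin 2) (ZMod p)) :
          Matrix (Fin 2) (Fin 2) (ZMod p)).mulVec v ≠ v :=
  stmt15_general p hp hp3 S hS
end

section
/- Let G be a finite group with a nontrivial normal subgroup K ⊴ G and a nontrivial subgroup H ≤ G such that K ∩ H = {1}, G = K·H, and the conjugation action of H on K is fixed-point-free away from the identity (for all h ∈ H with h ≠ 1 and all k ∈ K with k ≠ 1, h·k·h⁻¹ ≠ k), i.e. G is a Frobenius group with kernel K and complement H. Consider the action of G by left multiplication on the coset space G/H. Then a subset S ⊆ G is an intersecting set if and only if there exists a family (H_c)_{c ∈ K} of pairwise disjoint subsets of H (H_c ⊆ H and H_c ∩ H_d = ∅ for distinct c, d ∈ K) such that S = { h·c : c ∈ K, h ∈ H_c }. -/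
/-!
Two elements `x, y` agree somewhere on `G ⧸ H` exactly when `x⁻¹ * y` is conjugate into `H`.
Every element of `G` is uniquely `h * c` with `h ∈ H`, `c ∈ K`. If `h * c` and `h * d` agree
somewhere, then `c⁻¹ * d ∈ K` is conjugate into `H`, so `c = d` because `K ∩ H = 1`. Conversely,
for `h ∈ H \ {1}` the map `k ↦ h⁻¹ * k⁻¹ * h * k` on `K` is injective by the Frobenius condition,
hence onto, so every element of the coset `h * K` is `K`-conjugate to `h`; this makes `h₁ * c₁`
and `h₂ * c₂` agree somewhere whenever `h₁ ≠ h₂`. Hence `S` is intersecting iff the sets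
`H_c = {h ∈ H | h * c ∈ S}` are pairwise disjoint.
-/

namespace Subgroup

variable {G : Type*} [Group G]

theorem exists_smul_eq_smul_iff (H : Subgroup G) (x y : G) :
    (∃ α : G ⧸ H, x • α = y • α) ↔ ∃ g : G, g⁻¹ * (x⁻¹ * y) * g ∈ H := by
  constructor
  · rintro ⟨α, hα⟩
    obtain ⟨g, rfl⟩ := QuotientGroup.mk_surjective α
    refine ⟨g, ?_⟩
    have : ((x * g : G) : G ⧸ H) = ((y * g : G) : G ⧸ H) := hα
    rw [QuotientGroup.eq] at this
    simpa only [mul_inv_rev, mul_assoc] using this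
  · rintro ⟨g, hg⟩
    refine ⟨(g : G ⧸ H), ?_⟩
    change ((x * g : G) : G ⧸ H) = ((y * g : G) : G ⧸ H)
    rw [QuotientGroup.eq]
    simpa only [mul_inv_rev, mul_assoc] using hg

theorem eq_one_of_conj_mem {K H : Subgroup G} [K.Normal] (hKH : K ⊓ H = ⊥) {k : G}
    (hk : k ∈ K) (g : G) (hg : g⁻¹ * k * g ∈ H) : k = 1 := by
  have hgK : g⁻¹ * k * g ∈ K := by simpa using Normal.conj_mem ‹_› k hk g⁻¹
  have : g⁻¹ * k * g = 1 := by
    simpa [← mem_bot, ← hKH] using And.intro hgK hg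
  simpa [mul_assoc] using congrArg (fun z => g * z * g⁻¹) this

theorem exists_eq_mul_of_forall_eq_mul {K H : Subgroup G} [K.Normal]
    (hprod : ∀ g : G, ∃ k ∈ K, ∃ h ∈ H, g = k * h) (g : G) :
    ∃ c ∈ K, ∃ h ∈ H, g = h * c := by
  obtain ⟨k, hk, h, hh, rfl⟩ := hprod g
  exact ⟨h⁻¹ * k * h, by simpa using Normal.conj_mem ‹_› k hk h⁻¹, h, hh, by group⟩

theorem eq_of_exists_mul_smul_eq {K H : Subgroup G} [K.Normal] (hKH : K ⊓ H = ⊥) (h : G)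
    {c d : G} (hc : c ∈ K) (hd : d ∈ K) (hα : ∃ α : G ⧸ H, (h * c) • α = (h * d) • α) :
    c = d := by
  obtain ⟨g, hg⟩ := (exists_smul_eq_smul_iff H _ _).1 hα
  rw [show (h * c)⁻¹ * (h * d) = c⁻¹ * d by group] at hg
  have := eq_one_of_conj_mem hKH (mul_mem (inv_mem hc) hd) g hg
  rwa [inv_mul_eq_one] at this

section Frobenius

variable [Finite G] {K H : Subgroup G} [K.Normal]

theorem exists_conj_eq_mul_of_frobenius
    (hfrob : ∀ h ∈ H, h ≠ 1 → ∀ k ∈ K, k ≠ 1 → h * k * h⁻¹ ≠ k)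
    {h : G} (hh : h ∈ H) (h1 : h ≠ 1) {c : G} (hc : c ∈ K) :
    ∃ k ∈ K, k⁻¹ * h * k = h * c := by
  let f : K → K := fun k =>
    ⟨h⁻¹ * (k : G)⁻¹ * h * k, by
      simpa [mul_assoc] using mul_mem (Normal.conj_mem ‹_› _ (inv_mem k.2) h⁻¹) k.2⟩
  have hf : Function.Injective f := by
    intro k₁ k₂ heq
    have heq : h⁻¹ * (k₁ : G)⁻¹ * h * k₁ = h⁻¹ * (k₂ : G)⁻¹ * h * k₂ := congrArg Subtype.val heq
    by_contra hne
    have hm : (k₂ : G) * (k₁ : G)⁻¹ ≠ 1 := fun h' =>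
      hne (Subtype.ext (mul_inv_eq_one.1 h').symm)
    refine hfrob h hh h1 _ (mul_mem k₂.2 (inv_mem k₁.2)) hm ?_
    calc h * (k₂ * (k₁ : G)⁻¹) * h⁻¹
        = k₂ * h * (h⁻¹ * (k₂ : G)⁻¹ * h * k₂) * (h⁻¹ * (k₁ : G)⁻¹ * h * k₁)⁻¹ *
            h⁻¹ * (k₁ : G)⁻¹ := by group
      _ = k₂ * (k₁ : G)⁻¹ := by rw [heq]; group
  obtain ⟨k, hk⟩ := Finite.surjective_of_injective hf ⟨c, hc⟩
  refine ⟨k, k.2, ?_⟩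
  rw [← show h⁻¹ * (k : G)⁻¹ * h * k = c from congrArg Subtype.val hk]
  group

theorem exists_mul_smul_eq_of_frobenius
    (hfrob : ∀ h ∈ H, h ≠ 1 → ∀ k ∈ K, k ≠ 1 → h * k * h⁻¹ ≠ k)
    {h₁ h₂ c₁ c₂ : G} (hh₁ : h₁ ∈ H) (hh₂ : h₂ ∈ H) (hne : h₁ ≠ h₂) (hc₁ : c₁ ∈ K) (hc₂ : c₂ ∈ K) :
    ∃ α : G ⧸ H, (h₁ * c₁) • α = (h₂ * c₂) • α := by
  obtain ⟨h, hh, rfl⟩ : ∃ h ∈ H, h₂ = h₁ * h := ⟨h₁⁻¹ * h₂, mul_mem (inv_mem hh₁) hh₂, by group⟩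
  have h1 : h ≠ 1 := fun h' => hne (by rw [h', mul_one])
  have hc : h⁻¹ * c₁⁻¹ * h * c₂ ∈ K :=
    mul_mem (by simpa using Normal.conj_mem ‹_› _ (inv_mem hc₁) h⁻¹) hc₂
  obtain ⟨k, -, hk⟩ := exists_conj_eq_mul_of_frobenius hfrob hh h1 hc
  refine (exists_smul_eq_smul_iff H _ _).2 ⟨k⁻¹, ?_⟩
  have : (h₁ * c₁)⁻¹ * (h₁ * h * c₂) = k⁻¹ * h * k := by rw [hk]; group
  rw [this, show k⁻¹⁻¹ * (k⁻¹ * h * k) * k⁻¹ = h by group]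
  exact hh

end Frobenius

end Subgroup

open Subgroup in
theorem stmt16_general {G : Type*} [Group G] [Finite G] (K H : Subgroup G) [K.Normal]
    (hKH : K ⊓ H = ⊥)
    (hprod : ∀ g : G, ∃ k ∈ K, ∃ h ∈ H, g = k * h)
    (hfrob : ∀ h ∈ H, h ≠ 1 → ∀ k ∈ K, k ≠ 1 → h * k * h⁻¹ ≠ k)
    (S : Set G) :
    (∀ x ∈ S, ∀ y ∈ S, ∃ α : G ⧸ H, x • α = y • α) ↔
      ∃ Hc : G → Set G,
        (∀ c ∈ K, Hc c ⊆ (H : Set G)) ∧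
        (∀ c ∈ K, ∀ d ∈ K, c ≠ d → Hc c ∩ Hc d = ∅) ∧
        S = {g : G | ∃ c ∈ K, ∃ h ∈ Hc c, g = h * c} := by
  constructor
  · intro hS
    refine ⟨fun c => {h | h ∈ H ∧ h * c ∈ S}, fun c _ h hh => hh.1, ?_, ?_⟩
    · intro c hc d hd hcd
      refine Set.eq_empty_of_forall_notMem fun h ⟨⟨_, hhc⟩, _, hhd⟩ => hcd ?_
      exact eq_of_exists_mul_smul_eq hKH h hc hd (hS _ hhc _ hhd)
    · ext s
      refine ⟨fun hs => ?_, fun ⟨c, _, h, ⟨_, hhS⟩, hs⟩ => hs ▸ hhS⟩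
      obtain ⟨c, hc, h, hh, rfl⟩ := exists_eq_mul_of_forall_eq_mul hprod s
      exact ⟨c, hc, h, ⟨hh, hs⟩, rfl⟩
  · rintro ⟨Hc, hsub, hdisj, rfl⟩ _ ⟨c₁, hc₁, h₁, hh₁, rfl⟩ _ ⟨c₂, hc₂, h₂, hh₂, rfl⟩
    by_cases heq : h₁ = h₂
    · subst heq
      obtain rfl : c₁ = c₂ := by
        by_contra hne
        exact (hdisj c₁ hc₁ c₂ hc₂ hne).subset ⟨hh₁, hh₂⟩
      exact ⟨(1 : G), rfl⟩
    · exact exists_mul_smul_eq_of_frobenius hfrob (hsub c₁ hc₁ hh₁) (hsub c₂ hc₂ hh₂) heq hc₁ hc₂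

/-- Let `G` be a finite Frobenius group with kernel `K` and
complement `H` (so `K ⊴ G` and `H ≤ G` are nontrivial, `K ∩ H = 1`, `G = K·H`,
and conjugation by nonidentity elements of `H` fixes no nonidentity element of
`K`), acting by left multiplication on `G ⧸ H`.  Then `S ⊆ G` is an intersecting
set if and only if there is a family `(H_c)_{c ∈ K}` of pairwise disjoint subsets
of `H` with `S = { h·c : c ∈ K, h ∈ H_c }`. -/
theorem stmt16 {G : Type*} [Group G] [Finite G] (K H : Subgroup G) [K.Normal]
    (hK : K ≠ ⊥) (hH : H ≠ ⊥) (hKH : K ⊓ H = ⊥)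
    (hprod : ∀ g : G, ∃ k ∈ K, ∃ h ∈ H, g = k * h)
    (hfrob : ∀ h ∈ H, h ≠ 1 → ∀ k ∈ K, k ≠ 1 → h * k * h⁻¹ ≠ k)
    (S : Set G) :
    (∀ x ∈ S, ∀ y ∈ S, ∃ α : G ⧸ H, x • α = y • α) ↔
      ∃ Hc : G → Set G,
        (∀ c ∈ K, Hc c ⊆ (H : Set G)) ∧
        (∀ c ∈ K, ∀ d ∈ K, c ≠ d → Hc c ∩ Hc d = ∅) ∧
        S = {g : G | ∃ c ∈ K, ∃ h ∈ Hc c, g = h * c} :=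
  stmt16_general K H hKH hprod hfrob S
end

section
/- Let p be a prime and let P be a finite p-group acting faithfully and transitively on a finite set Ω (i.e. P is a transitive permutation p-group). Then P contains a sharply transitive subset: there exists C ⊆ P such that for every pair (α, β) ∈ Ω × Ω there is exactly one c ∈ C with c·α = β. -/
/-!
Induct on `|Ω|`, replacing the group by its image in `Perm Ω` so that the action is faithful.
A nontrivial `p`-group `G` has nontrivial centre `Z`, and in a faithful transitive action a
central element fixing one point fixes every point, so `Z` acts semiregularly and its orbits
are strictly fewer than the points. A sharply transitive `C ⊆ G` for the action on the `Z`-orbits,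
given by induction, lifts to the sharply transitive subset `Z * C`.
-/

open MulAction Pointwise

def Set.IsSharplyTransitive {G : Type*} (α : Type*) [SMul G α] (C : Set G) : Prop :=
  ∀ a b : α, ∃! g, g ∈ C ∧ g • a = b

section SharplyTransitive

variable {G α : Type*} [Group G] [MulAction G α]

theorem Set.isSharplyTransitive_one [Subsingleton α] : (1 : Set G).IsSharplyTransitive α :=
  fun _ _ => ⟨1, ⟨rfl, Subsingleton.elim _ _⟩, fun _ hg => hg.1⟩

theorem Set.IsSharplyTransitive.image_of_smul_eq {H : Type*} [Group H] [MulAction H α]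
    {C : Set H} (hC : C.IsSharplyTransitive α) (s : H → G)
    (hs : ∀ h (a : α), s h • a = h • a) :
    (s '' C).IsSharplyTransitive α := by
  intro a b
  obtain ⟨c, ⟨hcC, hcab⟩, hc_unique⟩ := hC a b
  refine ⟨s c, ⟨Set.mem_image_of_mem s hcC, by rw [hs, hcab]⟩, ?_⟩
  rintro _ ⟨⟨d, hdC, rfl⟩, hdab⟩
  rw [hc_unique d ⟨hdC, by rwa [← hs]⟩]

theorem exists_isSharplyTransitive_of_range_toPermHom
    (h : ∃ C : Set (toPermHom G α).range, C.IsSharplyTransitive α) :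
    ∃ C : Set G, C.IsSharplyTransitive α := by
  obtain ⟨C, hC⟩ := h
  choose s hs using (toPermHom G α).rangeRestrict_surjective
  exact ⟨s '' C, hC.image_of_smul_eq s fun h a => congrArg (· • a) (hs h)⟩

end SharplyTransitive

namespace MulAction

variable {G α : Type*} [Group G] [MulAction G α]

instance isPretransitive_range_toPermHom [IsPretransitive G α] :
    IsPretransitive (toPermHom G α).range α where
  exists_smul_eq a b :=
    let ⟨g, hg⟩ := exists_smul_eq G a b
    ⟨⟨toPermHom G α g, g, rfl⟩, hg⟩

theorem nontrivial_of_isPretransitive [IsPretransitive G α] [Nontrivial α] : Nontrivial G := by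
  obtain ⟨a, b, hab⟩ := exists_pair_ne α
  obtain ⟨g, hg⟩ := exists_smul_eq G a b
  exact ⟨g, 1, fun h => hab (by rw [← hg, h, one_smul])⟩

theorem eq_one_of_mem_center_of_smul_eq [FaithfulSMul G α] [IsPretransitive G α] {z : G}
    (hz : z ∈ Subgroup.center G) {a : α} (hza : z • a = a) : z = 1 := by
  refine eq_of_smul_eq_smul (α := α) fun b => ?_
  obtain ⟨g, rfl⟩ := exists_smul_eq G a b
  rw [one_smul, smul_smul, hz.comm, mul_smul, hza]

theorem card_orbitRel_quotient_lt [Finite α] {H : Subgroup G} {h : H} {a : α}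
    (hha : h • a ≠ a) :
    Nat.card (orbitRel.Quotient H α) < Nat.card α := by
  refine lt_of_not_ge fun hle => hha ?_
  refine (Quotient.mk''_surjective.bijective_of_nat_card_le hle).1 ?_
  exact Quotient.sound' ⟨h, rfl⟩

instance orbitRel.Quotient.mulAction (N : Subgroup G) [N.Normal] :
    MulAction G (orbitRel.Quotient N α) where
  smul g := Quotient.map' (g • ·) fun a b ⟨n, hn⟩ =>
    ⟨⟨g * n * g⁻¹, ‹N.Normal›.conj_mem n n.2 g⟩, by
      simp only [← hn, Subgroup.mk_smul, smul_smul, inv_mul_cancel_right]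
      exact mul_smul g (n : G) b⟩
  one_smul x := Quotient.inductionOn' x fun a => congrArg Quotient.mk'' (one_smul G a)
  mul_smul g h x := Quotient.inductionOn' x fun a => congrArg Quotient.mk'' (mul_smul g h a)

instance orbitRel.Quotient.isPretransitive {N : Subgroup G} [N.Normal] [IsPretransitive G α] :
    IsPretransitive G (orbitRel.Quotient N α) where
  exists_smul_eq x y := Quotient.inductionOn₂' x y fun a b =>
    let ⟨g, hg⟩ := exists_smul_eq G a b
    ⟨g, congrArg Quotient.mk'' hg⟩

end MulAction

theorem Set.IsSharplyTransitive.subgroup_mul {G α : Type*} [Group G] [MulAction G α]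
    {N : Subgroup G} [N.Normal] (hfree : ∀ n ∈ N, ∀ a : α, n • a = a → n = 1) {C : Set G}
    (hC : C.IsSharplyTransitive (orbitRel.Quotient N α)) :
    ((N : Set G) * C).IsSharplyTransitive α := by
  intro a b
  obtain ⟨c, ⟨hcC, hcab⟩, hc_unique⟩ := hC (Quotient.mk'' a) (Quotient.mk'' b)
  obtain ⟨⟨n, hnN⟩, hn⟩ := orbitRel_apply.mp (Quotient.exact' hcab.symm)
  replace hn : n • c • a = b := hn
  refine ⟨n * c, ⟨Set.mul_mem_mul hnN hcC, by rw [mul_smul]; exact hn⟩, ?_⟩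
  rintro _ ⟨⟨m, hmN, d, hdC, rfl⟩, hmdab⟩
  rw [mul_smul] at hmdab
  obtain rfl : d = c :=
    hc_unique d ⟨hdC, (Quotient.sound' (orbitRel_apply.mpr ⟨⟨m, hmN⟩, hmdab⟩)).symm⟩
  have hmn : m⁻¹ * n = 1 := hfree _ (N.mul_mem (N.inv_mem hmN) hnN) (d • a) <| by
    rw [mul_smul, hn, ← hmdab, inv_smul_smul]
  rw [inv_mul_eq_one.mp hmn]

theorem Subgroup.exists_isSharplyTransitive_of_isPGroup {p : ℕ} [Fact p.Prime] {α : Type*}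
    [Finite α] (G : Subgroup (Equiv.Perm α)) (hG : IsPGroup p G) [IsPretransitive G α] :
    ∃ C : Set G, C.IsSharplyTransitive α := by
  induction hn : Nat.card α using Nat.strong_induction_on generalizing α with
  | _ n ih =>
  subst hn
  rcases subsingleton_or_nontrivial α with _ | _
  · exact ⟨1, Set.isSharplyTransitive_one⟩
  have := nontrivial_of_isPretransitive (G := G) (α := α)
  have := hG.center_nontrivial
  obtain ⟨z, hz⟩ := exists_ne (1 : Subgroup.center G)
  obtain ⟨a⟩ : Nonempty α := inferInstance
  have hfree : ∀ g ∈ Subgroup.center G, ∀ a : α, g • a = a → g = 1 :=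
    fun g hg _ hga => eq_one_of_mem_center_of_smul_eq hg hga
  have hza : z • a ≠ a := fun h => hz (Subtype.ext (hfree z z.2 a h))
  obtain ⟨C, hC⟩ := exists_isSharplyTransitive_of_range_toPermHom <|
    ih _ (card_orbitRel_quotient_lt hza) _
      (hG.of_surjective _ (toPermHom G _).rangeRestrict_surjective) rfl
  exact ⟨_, hC.subgroup_mul hfree⟩

theorem stmt18_general (p : ℕ) (hp : p.Prime) (P : Type*) [Group P]
    (hP : IsPGroup p P) (Ω : Type*) [Finite Ω] [MulAction P Ω]
    [MulAction.IsPretransitive P Ω] :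
    ∃ C : Set P, ∀ α β : Ω, ∃! c, c ∈ C ∧ c • α = β := by
  have := Fact.mk hp
  exact exists_isSharplyTransitive_of_range_toPermHom <|
    Subgroup.exists_isSharplyTransitive_of_isPGroup _ <|
      hP.of_surjective _ (toPermHom P Ω).rangeRestrict_surjective

/-- Every transitive permutation `p`-group contains a sharply
transitive subset. -/
theorem stmt18 (p : ℕ) (hp : p.Prime) (P : Type*) [Group P] [Finite P]
    (hP : IsPGroup p P) (Ω : Type*) [Finite Ω] [MulAction P Ω]
    [FaithfulSMul P Ω] [MulAction.IsPretransitive P Ω] :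
    ∃ C : Set P, ∀ α β : Ω, ∃! c, c ∈ C ∧ c • α = β :=
  stmt18_general p hp P hP Ω
end

section
/- Let p be a prime, k ≥ 1, and let G be a transitive permutation group on a finite set Ω with |Ω| = p^k. Then G has the EKR property: for every intersecting set S ⊆ G and every ω ∈ Ω, |S| ≤ |G_ω|. -/
/-!
A Sylow `p`-subgroup `P` of `G` is still transitive on `Ω`, because `|Ω| = p ^ k` divides
`|P : P_ω|`. A transitive action of a finite nilpotent group such as `P` admits a family
`(g α)_{α ∈ Ω}` with `(g α)⁻¹ * g β` a derangement whenever `α ≠ β`: the centre `N` of the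
image of the group in `Perm Ω` is nontrivial and acts freely, so `Ω ≃ Ω / N × N`, and such a
family for `Ω / N` (by induction) multiplied by lifts of the elements of `N` works for `Ω`.
For an intersecting set `S`, the map `(s, α) ↦ s * g α` is injective on `S × Ω`, whence
`|S| * |Ω| ≤ |G| = |Ω| * |G_ω|`.
-/

open MulAction

/-- `(f i)⁻¹ * f j` is a derangement whenever `i ≠ j`: `f` is a clique of the derangement
graph. -/
def IsDerangementClique {G ι : Type*} [Group G] (Ω : Type*) [MulAction G Ω] (f : ι → G) :
    Prop :=
  Pairwise fun i j => ∀ a : Ω, f i • a ≠ f j • a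

theorem IsDerangementClique.ncard_mul_card_le {G Ω ι : Type*} [Group G] [Finite G]
    [MulAction G Ω] {f : ι → G} (hf : IsDerangementClique Ω f) {S : Set G}
    (hS : ∀ x ∈ S, ∀ y ∈ S, ∃ α : Ω, x • α = y • α) :
    S.ncard * Nat.card ι ≤ Nat.card G := by
  rw [← Nat.card_coe_set_eq, ← Nat.card_prod]
  refine Nat.card_le_card_of_injective (fun q : S × ι => (q.1 : G) * f q.2) ?_
  rintro ⟨⟨x, hx⟩, i⟩ ⟨⟨y, hy⟩, j⟩ hxy
  obtain ⟨α, hα⟩ := hS x hx y hy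
  obtain rfl : i = j := by
    by_contra hij
    refine hf hij ((f i)⁻¹ • α) ?_
    have hji : f j * (f i)⁻¹ = y⁻¹ * x := by
      rw [mul_inv_eq_iff_eq_mul, mul_assoc, eq_inv_mul_iff_mul_eq]
      exact hxy.symm
    rw [smul_inv_smul, ← mul_smul, hji, mul_smul, hα, inv_smul_smul]
  obtain rfl : x = y := mul_right_cancel hxy
  rfl

namespace MulAction

section Commuting

variable {H N Ω : Type*} [Group H] [Group N] [MulAction H Ω] [MulAction N Ω]
  [SMulCommClass H N Ω]

instance : MulAction H (orbitRel.Quotient N Ω) where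
  smul h := Quotient.map (h • ·) fun a b ⟨n, hn⟩ => ⟨n, by simp only [← hn, smul_comm]⟩
  one_smul q := Quotient.inductionOn' q fun a => congrArg Quotient.mk'' (one_smul H a)
  mul_smul h h' q := Quotient.inductionOn' q fun a => congrArg Quotient.mk'' (mul_smul h h' a)

theorem orbitRel.Quotient.smul_mk (h : H) (a : Ω) :
    h • (Quotient.mk'' a : orbitRel.Quotient N Ω) = Quotient.mk'' (h • a) :=
  rfl

instance [IsPretransitive H Ω] : IsPretransitive H (orbitRel.Quotient N Ω) where
  exists_smul_eq q r := Quotient.inductionOn₂' q r fun a b =>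
    (exists_smul_eq H a b).imp fun _ h => congrArg Quotient.mk'' h

theorem isCancelSMul_of_smulCommClass [IsPretransitive H Ω] [FaithfulSMul N Ω] :
    IsCancelSMul N Ω := by
  refine isCancelSMul_iff_eq_one_of_smul_eq.mpr fun n a hn =>
    eq_of_smul_eq_smul (α := Ω) fun b => ?_
  obtain ⟨h, rfl⟩ := exists_smul_eq H a b
  rw [← smul_comm h n a, hn, one_smul]

end Commuting

theorem nontrivial_range_toPermHom {H Ω : Type*} [Group H] [MulAction H Ω]
    [IsPretransitive H Ω] [Nontrivial Ω] : Nontrivial (toPermHom H Ω).range := by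
  obtain ⟨a, b, hab⟩ := exists_pair_ne Ω
  obtain ⟨h, rfl⟩ := exists_smul_eq H a b
  refine ⟨⟨⟨toPerm h, h, rfl⟩, 1, fun hh => hab ?_⟩⟩
  simpa using (DFunLike.congr_fun (congrArg Subtype.val hh) a).symm

end MulAction

theorem IsDerangementClique.mul {H N Ω ι κ : Type*} [Group H] [Group N] [MulAction H Ω]
    [MulAction N Ω] [SMulCommClass H N Ω] {f : ι → H} {g : κ → H}
    (hf : IsDerangementClique (orbitRel.Quotient N Ω) f) (hg : IsDerangementClique Ω g)
    (hgN : ∀ (j : κ) (a : Ω), g j • a ∈ orbit N a) :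
    IsDerangementClique Ω fun q : ι × κ => f q.1 * g q.2 := by
  rintro ⟨i, j⟩ ⟨i', j'⟩ hne a heq
  simp only [mul_smul] at heq
  obtain rfl : i = i' := by
    by_contra hi
    refine hf hi (Quotient.mk'' a) ?_
    have hmk : ∀ j, (Quotient.mk'' (g j • a) : orbitRel.Quotient N Ω) = Quotient.mk'' a :=
      fun j => Quotient.sound (hgN j a)
    have hquot := congrArg (Quotient.mk'' : Ω → orbitRel.Quotient N Ω) heq
    rwa [← orbitRel.Quotient.smul_mk (f i), ← orbitRel.Quotient.smul_mk (f i'), hmk, hmk]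
      at hquot
  obtain rfl : j = j' := by
    by_contra hj
    exact hg hj a (smul_left_cancel _ heq)
  exact hne rfl

theorem exists_isDerangementClique_of_isNilpotent {H : Type*} [Group H] [Finite H]
    [Group.IsNilpotent H] (Ω : Type*) [Finite Ω] [MulAction H Ω] [IsPretransitive H Ω] :
    ∃ f : Ω → H, IsDerangementClique Ω f := by
  induction hn : Nat.card Ω using Nat.strong_induction_on generalizing Ω with
  | _ n ih =>
  rcases subsingleton_or_nontrivial Ω with hΩ | hΩ
  · exact ⟨fun _ => 1, fun i j hij => (hij (Subsingleton.elim i j)).elim⟩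
  set R := (toPermHom H Ω).range
  have : Nontrivial R := nontrivial_range_toPermHom
  have : Group.IsNilpotent R :=
    Group.nilpotent_of_surjective _ (toPermHom H Ω).rangeRestrict_surjective
  set N := Subgroup.center R
  have : Nontrivial N :=
    (Subgroup.nontrivial_iff_ne_bot _).mpr (Group.IsNilpotent.center_ne_bot R)
  have : SMulCommClass H N Ω := ⟨fun x n a => by
    have hxn := Subgroup.mem_center_iff.mp n.2 ⟨toPerm x, x, rfl⟩
    exact DFunLike.congr_fun (congrArg Subtype.val hxn) a⟩
  have : FaithfulSMul N Ω := ⟨fun hn => Subtype.ext (Subtype.ext (Equiv.ext hn))⟩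
  have := isCancelSMul_of_smulCommClass (H := H) (N := N) (Ω := Ω)
  let e : Ω ≃ orbitRel.Quotient N Ω × N :=
    selfEquivOrbitsQuotientProd fun a => IsCancelSMul.stabilizer_eq_bot a
  have : Nonempty (orbitRel.Quotient N Ω) := ⟨Quotient.mk'' (Classical.arbitrary Ω)⟩
  have hcard : Nat.card (orbitRel.Quotient N Ω) < n := by
    rw [← hn, Nat.card_congr e, Nat.card_prod]
    exact lt_mul_of_one_lt_right Nat.card_pos Finite.one_lt_card
  obtain ⟨f, hf⟩ := ih _ hcard (orbitRel.Quotient N Ω) rfl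
  choose g hg using fun m : N => m.1.2
  have hgN : ∀ (m : N) (a : Ω), g m • a = m • a := fun m a => DFunLike.congr_fun (hg m) a
  have hgClique : IsDerangementClique Ω g := fun m m' hne a heq =>
    hne (IsCancelSMul.right_cancel m m' a (by rwa [← hgN, ← hgN]))
  exact ⟨_, (hf.mul hgClique fun m a => hgN m a ▸ mem_orbit a m).comp_of_injective e.injective⟩

theorem Sylow.isPretransitive_of_card_eq_prime_pow {G Ω : Type*} [Group G] [Finite G]
    [MulAction G Ω] [IsPretransitive G Ω] {p k : ℕ} [Fact p.Prime] (hΩ : Nat.card Ω = p ^ k)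
    (P : Sylow p G) : IsPretransitive P Ω := by
  obtain ⟨⟨ω⟩, _⟩ := Nat.card_pos_iff.mp (hΩ ▸ pow_pos (Fact.out : p.Prime).pos k)
  rw [isPretransitive_iff_orbit_eq_univ ω]
  have horbit : (orbit P ω).ncard = (stabilizer G ω).relIndex P := (index_stabilizer P ω).symm
  have hdvd : p ^ k ∣ (stabilizer G ω).relIndex P * (P : Subgroup G).index := by
    rw [← Subgroup.inf_relIndex_right, Subgroup.relIndex_mul_index inf_le_right, ← hΩ,
      ← index_stabilizer_of_transitive G ω]
    exact Subgroup.index_dvd_of_le inf_le_left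
  have hcop : Nat.Coprime (p ^ k) (P : Subgroup G).index :=
    ((Nat.Prime.coprime_iff_not_dvd Fact.out).mpr P.not_dvd_index).pow_left k
  have hpos : 0 < (orbit P ω).ncard :=
    (Set.ncard_pos (Set.toFinite _)).mpr ⟨ω, mem_orbit_self ω⟩
  refine Set.eq_of_subset_of_ncard_le (Set.subset_univ _) ?_
  rw [Set.ncard_univ, hΩ]
  exact Nat.le_of_dvd hpos (horbit ▸ hcop.dvd_of_dvd_mul_right hdvd)

theorem stmt19_general (p k : ℕ) (hp : p.Prime)
    {Ω : Type*} [Fintype Ω] (hΩ : Fintype.card Ω = p ^ k)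
    {G : Type*} [Group G] [Fintype G] [MulAction G Ω]
    [MulAction.IsPretransitive G Ω]
    (S : Set G) (hS : ∀ x ∈ S, ∀ y ∈ S, ∃ α : Ω, x • α = y • α) (ω : Ω) :
    S.ncard ≤ Nat.card (MulAction.stabilizer G ω) := by
  have : Fact p.Prime := ⟨hp⟩
  obtain ⟨P⟩ : Nonempty (Sylow p G) := inferInstance
  have := P.isPretransitive_of_card_eq_prime_pow (Nat.card_eq_fintype_card.trans hΩ)
  have := P.isPGroup'.isNilpotent
  obtain ⟨f, hf⟩ := exists_isDerangementClique_of_isNilpotent (H := P) Ω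
  have hbound := IsDerangementClique.ncard_mul_card_le (f := fun a => (f a : G)) hf hS
  rw [← (stabilizer G ω).index_mul_card, index_stabilizer_of_transitive, mul_comm] at hbound
  exact Nat.le_of_mul_le_mul_left hbound (Nat.card_pos_iff.2 ⟨⟨ω⟩, inferInstance⟩)

/-- Let `p` be a prime, `k ≥ 1`, and let `G` be a transitive
permutation group on a finite set `Ω` with `|Ω| = p ^ k`.  Then `G` has the EKR
property: every intersecting set `S ⊆ G` satisfies `|S| ≤ |G_ω|`. -/
theorem stmt19 (p k : ℕ) (hp : p.Prime) (hk : 1 ≤ k)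
    {Ω : Type*} [Fintype Ω] (hΩ : Fintype.card Ω = p ^ k)
    {G : Type*} [Group G] [Fintype G] [MulAction G Ω] [FaithfulSMul G Ω]
    [MulAction.IsPretransitive G Ω]
    (S : Set G) (hS : ∀ x ∈ S, ∀ y ∈ S, ∃ α : Ω, x • α = y • α) (ω : Ω) :
    S.ncard ≤ Nat.card (MulAction.stabilizer G ω) :=
  stmt19_general p k hp hΩ S hS ω
end
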